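/- arXiv:2208.05143 — 10 statements merged into one kernel-verified Lean document; each statement's English description precedes it below -/
import Mathlib

section
/- Let a, b, c be pairwise coprime integers with 1 < a < b < c, set N = abc − ab − ac − bc, and let G = {x·bc + y·ac + z·ab : x, y, z nonnegative integers}. Then every n ∈ G with 0 ≤ n ≤ N has a unique representation n = i·bc + j·ac + k·ab with i, j, k nonnegative integers; moreover this unique representation automatically satisfies i < a, j < b and k < c. -/
/-- Every `n ∈ G` with `0 ≤ n ≤ N` has a unique representation
`n = i·bc + j·ac + k·ab` with `i, j, k` nonnegative integers, and this representation
automatically satisfies `i < a`, `j < b`, `k < c`. -/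
theorem unique_representation_in_G (a b c : ℤ)
    (hab : IsCoprime a b) (hac : IsCoprime a c) (hbc : IsCoprime b c)
    (h1a : 1 < a) (hab' : a < b) (hbc' : b < c)
    (N : ℤ) (hN : N = a * b * c - a * b - a * c - b * c)
    (n : ℤ) (hn0 : 0 ≤ n) (hnN : n ≤ N)
    (hnG : ∃ x y z : ℕ, n = (x : ℤ) * (b * c) + (y : ℤ) * (a * c) + (z : ℤ) * (a * b)) :
    (∃! t : ℕ × ℕ × ℕ,
      n = (t.1 : ℤ) * (b * c) + (t.2.1 : ℤ) * (a * c) + (t.2.2 : ℤ) * (a * b)) ∧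
    (∀ i j k : ℕ,
      n = (i : ℤ) * (b * c) + (j : ℤ) * (a * c) + (k : ℤ) * (a * b) →
      (i : ℤ) < a ∧ (j : ℤ) < b ∧ (k : ℤ) < c) := by
  have ha0 : (0:ℤ) < a := by linarith
  have hb0 : (0:ℤ) < b := by linarith
  have hc0 : (0:ℤ) < c := by linarith
  -- bounds
  have bounds : ∀ i j k : ℕ,
      n = (i : ℤ) * (b * c) + (j : ℤ) * (a * c) + (k : ℤ) * (a * b) →
      (i : ℤ) < a ∧ (j : ℤ) < b ∧ (k : ℤ) < c := by
    intro i j k h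
    have hi0 : (0:ℤ) ≤ (i:ℤ) := Int.natCast_nonneg i
    have hj0 : (0:ℤ) ≤ (j:ℤ) := Int.natCast_nonneg j
    have hk0 : (0:ℤ) ≤ (k:ℤ) := Int.natCast_nonneg k
    refine ⟨?_, ?_, ?_⟩
    · by_contra hcon
      push_neg at hcon
      nlinarith [mul_le_mul_of_nonneg_right hcon (le_of_lt (mul_pos hb0 hc0)),
        mul_nonneg hj0 (le_of_lt (mul_pos ha0 hc0)),
        mul_nonneg hk0 (le_of_lt (mul_pos ha0 hb0)),
        mul_pos ha0 hb0, mul_pos ha0 hc0, mul_pos hb0 hc0]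
    · by_contra hcon
      push_neg at hcon
      nlinarith [mul_le_mul_of_nonneg_right hcon (le_of_lt (mul_pos ha0 hc0)),
        mul_nonneg hi0 (le_of_lt (mul_pos hb0 hc0)),
        mul_nonneg hk0 (le_of_lt (mul_pos ha0 hb0)),
        mul_pos ha0 hb0, mul_pos ha0 hc0, mul_pos hb0 hc0]
    · by_contra hcon
      push_neg at hcon
      nlinarith [mul_le_mul_of_nonneg_right hcon (le_of_lt (mul_pos ha0 hb0)),
        mul_nonneg hi0 (le_of_lt (mul_pos hb0 hc0)),
        mul_nonneg hj0 (le_of_lt (mul_pos ha0 hc0)),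
        mul_pos ha0 hb0, mul_pos ha0 hc0, mul_pos hb0 hc0]
  refine ⟨?_, bounds⟩
  obtain ⟨x, y, z, hxyz⟩ := hnG
  refine ⟨(x, y, z), hxyz, ?_⟩
  rintro ⟨i, j, k⟩ h
  simp only at h
  obtain ⟨hi, hj, hk⟩ := bounds i j k h
  obtain ⟨hx, hy, hz⟩ := bounds x y z hxyz
  have hi0 : (0:ℤ) ≤ (i:ℤ) := Int.natCast_nonneg i
  have hj0 : (0:ℤ) ≤ (j:ℤ) := Int.natCast_nonneg j
  have hk0 : (0:ℤ) ≤ (k:ℤ) := Int.natCast_nonneg k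
  have hx0 : (0:ℤ) ≤ (x:ℤ) := Int.natCast_nonneg x
  have hy0 : (0:ℤ) ≤ (y:ℤ) := Int.natCast_nonneg y
  have hz0 : (0:ℤ) ≤ (z:ℤ) := Int.natCast_nonneg z
  -- i = x
  have habc : IsCoprime a (b * c) := hab.mul_right hac
  have heq : (i:ℤ) * (b * c) + (j:ℤ) * (a * c) + (k:ℤ) * (a * b)
      = (x:ℤ) * (b * c) + (y:ℤ) * (a * c) + (z:ℤ) * (a * b) := h.symm.trans hxyz
  have hdvd_i : a ∣ ((i:ℤ) - x) * (b * c) := by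
    refine ⟨((y:ℤ) - j) * c + ((z:ℤ) - k) * b, ?_⟩
    linear_combination heq
  have hdvd_i' : a ∣ ((i:ℤ) - x) := (IsCoprime.dvd_of_dvd_mul_right habc hdvd_i)
  have hix : (i:ℤ) - x = 0 := Int.eq_zero_of_abs_lt_dvd hdvd_i' (by
    rw [abs_sub_lt_iff]; constructor <;> linarith)
  have hix' : (i:ℤ) = x := by linarith
  -- j = y
  have heq2 : ((j:ℤ) - y) * c = ((z:ℤ) - k) * b := by
    have ha' : a ≠ 0 := by linarith
    apply mul_left_cancel₀ ha'
    linear_combination heq - hix' * (b * c)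
  have hdvd_j : b ∣ ((j:ℤ) - y) * c := ⟨(z:ℤ) - k, by linarith [heq2]⟩
  have hdvd_j' : b ∣ ((j:ℤ) - y) := IsCoprime.dvd_of_dvd_mul_right hbc hdvd_j
  have hjy : (j:ℤ) - y = 0 := Int.eq_zero_of_abs_lt_dvd hdvd_j' (by
    rw [abs_sub_lt_iff]; constructor <;> linarith)
  have hjy' : (j:ℤ) = y := by linarith
  have hkz : (k:ℤ) = z := by
    have hab0 : a * b ≠ 0 := by positivity
    have h3 : ((k:ℤ) - z) * (a * b) = 0 := by
      linear_combination heq - hix' * (b * c) - hjy * (a * c)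
    rcases mul_eq_zero.mp h3 with h' | h'
    · linarith
    · exact absurd h' hab0
  have : i = x := by exact_mod_cast hix'
  have : j = y := by exact_mod_cast hjy'
  have : k = z := by exact_mod_cast hkz
  simp_all
end

section
/- Let a, b, c be pairwise coprime integers with 1 < a < b < c and (a,b,c) ≠ (2,3,5), set N = abc − ab − ac − bc, and let G = {x·bc + y·ac + z·ab : x, y, z nonnegative integers}. Then for every integer n with 0 ≤ n ≤ N, the cardinality of G ∩ [0,n] is at most 1 plus the cardinality of G ∩ [N−n, N]. -/
/-- Auxiliary general lemma: for any additive submonoid `G` of the integers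
(given by `0 ∈ G` and closure under addition) and any `0 ≤ n ≤ N`,
`|G ∩ [0,n]| ≤ 1 + |G ∩ [N−n, N]|`. -/
lemma card_initial_le_aux (G : Set ℤ) (h0 : (0 : ℤ) ∈ G)
    (hadd : ∀ u v : ℤ, u ∈ G → v ∈ G → u + v ∈ G)
    (N n : ℤ) (hn0 : 0 ≤ n) (hnN : n ≤ N) :
    {m : ℤ | m ∈ G ∧ 0 ≤ m ∧ m ≤ n}.ncard ≤
      1 + {m : ℤ | m ∈ G ∧ N - n ≤ m ∧ m ≤ N}.ncard := by
  classical
  set A := {m : ℤ | m ∈ G ∧ 0 ≤ m ∧ m ≤ n} with hA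
  set B := {m : ℤ | m ∈ G ∧ N - n ≤ m ∧ m ≤ N} with hB
  have hAfin : A.Finite := (Set.finite_Icc 0 n).subset (fun m hm => ⟨hm.2.1, hm.2.2⟩)
  have hBfin : B.Finite := (Set.finite_Icc (N - n) N).subset (fun m hm => ⟨hm.2.1, hm.2.2⟩)
  by_cases hcase : N - n ≤ 0
  · have hsub : A ⊆ B := fun m hm => ⟨hm.1, by
      have := hm.2.1; omega, le_trans hm.2.2 hnN⟩
    have := Set.ncard_le_ncard hsub hBfin
    omega
  · push_neg at hcase
    obtain ⟨t, ⟨htG, ht0, htle⟩, htmax⟩ :=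
      Int.exists_greatest_of_bdd
        (P := fun t : ℤ => t ∈ G ∧ 0 ≤ t ∧ t ≤ N - n - 1)
        ⟨N - n - 1, fun z hz => hz.2.2⟩ ⟨0, h0, le_refl 0, by omega⟩
    have hmaps : ∀ m ∈ A \ {0}, m + t ∈ B := by
      rintro m ⟨⟨hmG, hm0, hmn⟩, hm0'⟩
      have hmne : m ≠ 0 := hm0'
      have hsumG : m + t ∈ G := hadd m t hmG htG
      refine ⟨hsumG, ?_, by omega⟩
      by_contra hlt
      push_neg at hlt
      have := htmax (m + t) ⟨hsumG, by omega, by omega⟩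
      omega
    have hinj : Set.InjOn (· + t) (A \ {0}) := fun u _ v _ h => by
      simpa using h
    have h1 : (A \ {0}).ncard ≤ B.ncard :=
      Set.ncard_le_ncard_of_injOn (· + t) hmaps hinj hBfin
    have h0A : (0 : ℤ) ∈ A := ⟨h0, le_refl 0, hn0⟩
    have h2 : (A \ {0}).ncard + 1 = A.ncard :=
      Set.ncard_diff_singleton_add_one h0A hAfin
    omega

/-- For `0 ≤ n ≤ N`, `|G ∩ [0,n]| ≤ 1 + |G ∩ [N−n, N]|`. -/
theorem card_G_initial_le (a b c : ℤ)
    (hab : IsCoprime a b) (hac : IsCoprime a c) (hbc : IsCoprime b c)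
    (h1a : 1 < a) (hab' : a < b) (hbc' : b < c)
    (hne : (a, b, c) ≠ (2, 3, 5))
    (N : ℤ) (hN : N = a * b * c - a * b - a * c - b * c)
    (n : ℤ) (hn0 : 0 ≤ n) (hnN : n ≤ N) :
    {m : ℤ | (∃ x y z : ℕ, m = (x : ℤ) * (b * c) + (y : ℤ) * (a * c) + (z : ℤ) * (a * b)) ∧
        0 ≤ m ∧ m ≤ n}.ncard ≤
    1 + {m : ℤ | (∃ x y z : ℕ, m = (x : ℤ) * (b * c) + (y : ℤ) * (a * c) + (z : ℤ) * (a * b)) ∧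
        N - n ≤ m ∧ m ≤ N}.ncard := by
  exact card_initial_le_aux
    {m : ℤ | ∃ x y z : ℕ, m = (x : ℤ) * (b * c) + (y : ℤ) * (a * c) + (z : ℤ) * (a * b)}
    ⟨0, 0, 0, by norm_num⟩
    (by
      rintro u v ⟨x1, y1, z1, rfl⟩ ⟨x2, y2, z2, rfl⟩
      exact ⟨x1 + x2, y1 + y2, z1 + z2, by push_cast; ring⟩)
    N n hn0 hnN
end

section
/- Let a, b, c be pairwise coprime integers with 1 < a < b < c and (a,b,c) ≠ (2,3,5), and set N = abc − ab − ac − bc. Let e₀, p₁, p₂, p₃ be the unique integers with 0 < p₁ < a, 0 < p₂ < b, 0 < p₃ < c and abc·e₀ + p₁·bc + p₂·ac + p₃·ab = −1; define Δ(n) = 1 − e₀·n − ⌈p₁n/a⌉ − ⌈p₂n/b⌉ − ⌈p₃n/c⌉ and τ(i) = Σ_{n=0}^{i−1} Δ(n). Then τ(n+1) ≤ 1 for all integers n with 0 ≤ n ≤ N. -/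
/-!
Writing `rₖ(m)` for the residues `-(pₖ m) mod aₖ`, the ceilings in `Δ` combine with the
equation for `e₀` into `Δ(m) · abc = abc + m - R(m)`, where `R(m) = r₁ bc + r₂ ac + r₃ ab`.
Since `-p₁ bc ≡ 1 (mod a)` (and similarly for `b`, `c`), `r₁(m)` is the `bc`-coefficient of `m`
whenever `m = x bc + y ac + z ab` with `0 ≤ x < a`, … . Hence, for `0 ≤ m ≤ N`, `Δ(m) = 1` exactly
when `m` lies in the semigroup `S = ⟨bc, ac, ab⟩`, and the symmetry `rₖ(N - m) = aₖ - 1 - rₖ(m)`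
gives `Δ(N - m) = -Δ(m)`. So `Δ(m) = [m ∈ S] - [N - m ∈ S]`, and `τ(n + 1)` counts the elements
of `S` in `[0, n]` minus those of `N - S`. If `s` is the largest element of `S` in `[0, N - n]`,
then `m ↦ N - s - m` sends the nonzero elements of `S ∩ [0, n]` injectively into `(N - S) ∩ [0, n]`.
-/

open Finset

lemma mul_ceil_intCast_div (u v : ℤ) (hv : 0 < v) : v * ⌈(u : ℚ) / v⌉ = u + -u % v := by
  lift v to ℕ using hv.le
  rw [Int.cast_natCast, Rat.ceil_intCast_div_natCast]
  linarith [Int.mul_ediv_add_emod (-u) v]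

lemma neg_mul_emod_eq_emod {n p k m x : ℤ} (hk : n ∣ p * k + 1) (hm : n ∣ m - x * k) :
    -(p * m) % n = x % n :=
  (Int.modEq_iff_dvd (n := n) (a := -(p * m)) (b := x)).2 <| by
    have := dvd_add (hm.mul_left p) (hk.mul_left x)
    rwa [show p * (m - x * k) + x * (p * k + 1) = x - -(p * m) by ring] at this

lemma neg_mul_sub_emod {n p k N m : ℤ} (hn : 0 < n) (hk : n ∣ p * k + 1) (hN : n ∣ N + k) :
    -(p * (N - m)) % n = n - 1 - -(p * m) % n := by
  have h0 := Int.emod_nonneg (-(p * m)) hn.ne'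
  have hlt := Int.emod_lt_of_pos (-(p * m)) hn
  rw [← Int.emod_eq_of_lt (by omega) (by omega : n - 1 - -(p * m) % n < n)]
  obtain ⟨u, hu⟩ := hk
  obtain ⟨v, hv⟩ := hN
  refine Int.modEq_iff_dvd.2 ⟨1 + -(p * m) / n + p * v - u, ?_⟩
  linear_combination -Int.mul_ediv_add_emod (-(p * m)) n + p * hv - hu

lemma AddSubmonoid.mem_closure_triple {M : Type*} [AddCommMonoid M] (u v w m : M) :
    m ∈ closure {u, v, w} ↔ ∃ x y z : ℕ, x • u + y • v + z • w = m := by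
  rw [Set.insert_eq, closure_union, mem_sup]
  simp_rw [mem_closure_singleton, mem_closure_pair]
  constructor
  · rintro ⟨_, ⟨x, rfl⟩, _, ⟨y, z, rfl⟩, rfl⟩
    exact ⟨x, y, z, add_assoc _ _ _⟩
  · rintro ⟨x, y, z, rfl⟩
    exact ⟨_, ⟨x, rfl⟩, _, ⟨y, z, rfl⟩, (add_assoc _ _ _).symm⟩

lemma card_filter_mem_le_card_filter_sub_mem_add_one (S : AddSubmonoid ℤ)
    [DecidablePred (· ∈ S)] {N : ℤ} {n : ℕ} (hn : (n : ℤ) ≤ N) :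
    #{m ∈ range (n + 1) | ((m : ℕ) : ℤ) ∈ S} ≤ #{m ∈ range (n + 1) | N - (m : ℕ) ∈ S} + 1 := by
  obtain ⟨s, hs, hsN, hmax⟩ : ∃ s : ℕ, (s : ℤ) ∈ S ∧ (s : ℤ) ≤ N - n ∧
      ∀ t : ℕ, (t : ℤ) ≤ N - n → (t : ℤ) ∈ S → t ≤ s := by
    let P : ℕ → Prop := fun t => (t : ℤ) ∈ S
    refine ⟨Nat.findGreatest P (N - n).toNat,
      Nat.findGreatest_spec (P := P) (Nat.zero_le _) (by simp [P]), ?_, fun t ht htS => ?_⟩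
    · have := Nat.findGreatest_le (P := P) (N - n).toNat
      omega
    · exact Nat.le_findGreatest (by omega) htS
  have key : #({m ∈ range (n + 1) | ((m : ℕ) : ℤ) ∈ S}.erase 0) ≤
      #{m ∈ range (n + 1) | N - (m : ℕ) ∈ S} := by
    refine card_le_card_of_injOn (fun m : ℕ => (N - s - m).toNat) (fun m hm => ?_)
      (fun m hm m' hm' h => ?_)
    · simp only [coe_erase, coe_filter, mem_range, Set.mem_sdiff, Set.mem_ofPred_eq,
        Set.mem_singleton_iff] at hm
      obtain ⟨⟨hmn, hmS⟩, hm0⟩ := hm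
      have hsm : (s : ℤ) + m ∈ S := S.add_mem hs hmS
      have hgt : N - n < s + m := by
        by_contra! h
        have := hmax (s + m) (by push_cast; omega) (by push_cast; exact hsm)
        omega
      simp only [coe_filter, mem_range, Set.mem_ofPred_eq]
      refine ⟨by omega, ?_⟩
      convert hsm using 1
      omega
    · simp only [coe_erase, coe_filter, mem_range, Set.mem_sdiff, Set.mem_ofPred_eq,
        Set.mem_singleton_iff] at hm hm'
      simp only at h
      omega
  have := pred_card_le_card_erase (s := {m ∈ range (n + 1) | ((m : ℕ) : ℤ) ∈ S}) (a := 0)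
  omega

namespace GradedRoots

variable (a b c e₀ p₁ p₂ p₃ : ℤ)

/-- `Δ`, extended to all integers `m` so that its symmetry under `m ↦ N - m` can be stated. -/
def delta (m : ℤ) : ℤ :=
  1 - e₀ * m - ⌈(p₁ * m : ℚ) / a⌉ - ⌈(p₂ * m : ℚ) / b⌉ - ⌈(p₃ * m : ℚ) / c⌉

def residueSum (m : ℤ) : ℤ :=
  -(p₁ * m) % a * (b * c) + -(p₂ * m) % b * (a * c) + -(p₃ * m) % c * (a * b)

def semigroup : AddSubmonoid ℤ := AddSubmonoid.closure {b * c, a * c, a * b}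

variable {a b c e₀ p₁ p₂ p₃}

lemma mem_semigroup_iff {m : ℤ} : m ∈ semigroup a b c ↔
    ∃ x y z : ℤ, 0 ≤ x ∧ 0 ≤ y ∧ 0 ≤ z ∧ x * (b * c) + y * (a * c) + z * (a * b) = m := by
  rw [semigroup, AddSubmonoid.mem_closure_triple]
  constructor
  · rintro ⟨x, y, z, rfl⟩
    exact ⟨x, y, z, by positivity, by positivity, by positivity, by simp⟩
  · rintro ⟨x, y, z, hx, hy, hz, rfl⟩
    lift x to ℕ using hx
    lift y to ℕ using hy
    lift z to ℕ using hz
    exact ⟨x, y, z, by simp⟩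

lemma dvd_mul_add_one (heq : a * b * c * e₀ + p₁ * (b * c) + p₂ * (a * c) + p₃ * (a * b) = -1) :
    a ∣ p₁ * (b * c) + 1 ∧ b ∣ p₂ * (a * c) + 1 ∧ c ∣ p₃ * (a * b) + 1 :=
  ⟨⟨-(b * c * e₀ + p₂ * c + p₃ * b), by linear_combination heq⟩,
    ⟨-(a * c * e₀ + p₁ * c + p₃ * a), by linear_combination heq⟩,
    ⟨-(a * b * e₀ + p₁ * b + p₂ * a), by linear_combination heq⟩⟩

lemma delta_mul (ha : 0 < a) (hb : 0 < b) (hc : 0 < c)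
    (heq : a * b * c * e₀ + p₁ * (b * c) + p₂ * (a * c) + p₃ * (a * b) = -1) (m : ℤ) :
    delta a b c e₀ p₁ p₂ p₃ m * (a * b * c) = a * b * c + m - residueSum a b c p₁ p₂ p₃ m := by
  have h₁ := mul_ceil_intCast_div (p₁ * m) a ha
  have h₂ := mul_ceil_intCast_div (p₂ * m) b hb
  have h₃ := mul_ceil_intCast_div (p₃ * m) c hc
  push_cast at h₁ h₂ h₃
  rw [delta, residueSum]
  linear_combination (-(b * c)) * h₁ - (a * c) * h₂ - (a * b) * h₃ - m * heq

lemma residueSum_nonneg (ha : 0 < a) (hb : 0 < b) (hc : 0 < c) (m : ℤ) :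
    0 ≤ residueSum a b c p₁ p₂ p₃ m := by
  have := Int.emod_nonneg (-(p₁ * m)) ha.ne'
  have := Int.emod_nonneg (-(p₂ * m)) hb.ne'
  have := Int.emod_nonneg (-(p₃ * m)) hc.ne'
  rw [residueSum]
  positivity

lemma residueSum_mem (ha : 0 < a) (hb : 0 < b) (hc : 0 < c) (m : ℤ) :
    residueSum a b c p₁ p₂ p₃ m ∈ semigroup a b c :=
  mem_semigroup_iff.2 ⟨_, _, _, Int.emod_nonneg _ ha.ne', Int.emod_nonneg _ hb.ne',
    Int.emod_nonneg _ hc.ne', rfl⟩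

lemma residueSum_eq_self_of_mem (ha : 0 < a) (hb : 0 < b) (hc : 0 < c)
    (heq : a * b * c * e₀ + p₁ * (b * c) + p₂ * (a * c) + p₃ * (a * b) = -1) {m : ℤ}
    (hm : m ∈ semigroup a b c) (hlt : m < a * b * c) : residueSum a b c p₁ p₂ p₃ m = m := by
  obtain ⟨x, y, z, hx, hy, hz, rfl⟩ := mem_semigroup_iff.1 hm
  obtain ⟨h₁, h₂, h₃⟩ := dvd_mul_add_one heq
  have hxa : x < a := by nlinarith [mul_pos hb hc, mul_pos ha hc, mul_pos ha hb]
  have hyb : y < b := by nlinarith [mul_pos hb hc, mul_pos ha hc, mul_pos ha hb]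
  have hzc : z < c := by nlinarith [mul_pos hb hc, mul_pos ha hc, mul_pos ha hb]
  rw [residueSum, neg_mul_emod_eq_emod (x := x) h₁ ⟨y * c + z * b, by ring⟩,
    neg_mul_emod_eq_emod (x := y) h₂ ⟨x * c + z * a, by ring⟩,
    neg_mul_emod_eq_emod (x := z) h₃ ⟨x * b + y * a, by ring⟩,
    Int.emod_eq_of_lt hx hxa, Int.emod_eq_of_lt hy hyb, Int.emod_eq_of_lt hz hzc]

lemma residueSum_sub (ha : 0 < a) (hb : 0 < b) (hc : 0 < c)
    (heq : a * b * c * e₀ + p₁ * (b * c) + p₂ * (a * c) + p₃ * (a * b) = -1) (m : ℤ) :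
    residueSum a b c p₁ p₂ p₃ (a * b * c - a * b - a * c - b * c - m) =
      (a - 1) * (b * c) + (b - 1) * (a * c) + (c - 1) * (a * b) - residueSum a b c p₁ p₂ p₃ m := by
  obtain ⟨h₁, h₂, h₃⟩ := dvd_mul_add_one heq
  rw [residueSum, residueSum, neg_mul_sub_emod ha h₁ ⟨b * c - b - c, by ring⟩,
    neg_mul_sub_emod hb h₂ ⟨a * c - a - c, by ring⟩,
    neg_mul_sub_emod hc h₃ ⟨a * b - a - b, by ring⟩]
  ring

lemma delta_sub (ha : 0 < a) (hb : 0 < b) (hc : 0 < c)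
    (heq : a * b * c * e₀ + p₁ * (b * c) + p₂ * (a * c) + p₃ * (a * b) = -1) (m : ℤ) :
    delta a b c e₀ p₁ p₂ p₃ (a * b * c - a * b - a * c - b * c - m) =
      -delta a b c e₀ p₁ p₂ p₃ m := by
  refine mul_right_cancel₀ (by positivity : a * b * c ≠ 0) ?_
  rw [delta_mul ha hb hc heq, residueSum_sub ha hb hc heq, neg_mul, delta_mul ha hb hc heq]
  ring

lemma delta_le_one (ha : 0 < a) (hb : 0 < b) (hc : 0 < c)
    (heq : a * b * c * e₀ + p₁ * (b * c) + p₂ * (a * c) + p₃ * (a * b) = -1) {m : ℤ}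
    (hlt : m < a * b * c) : delta a b c e₀ p₁ p₂ p₃ m ≤ 1 := by
  have h := delta_mul ha hb hc heq m
  have := residueSum_nonneg (p₁ := p₁) (p₂ := p₂) (p₃ := p₃) ha hb hc m
  have : delta a b c e₀ p₁ p₂ p₃ m < 2 :=
    lt_of_mul_lt_mul_right (a := a * b * c) (by linarith) (by positivity)
  omega

lemma delta_eq_one_iff (ha : 0 < a) (hb : 0 < b) (hc : 0 < c)
    (heq : a * b * c * e₀ + p₁ * (b * c) + p₂ * (a * c) + p₃ * (a * b) = -1) {m : ℤ}
    (hlt : m < a * b * c) : delta a b c e₀ p₁ p₂ p₃ m = 1 ↔ m ∈ semigroup a b c := by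
  have h := delta_mul ha hb hc heq m
  constructor
  · intro h1
    rw [h1, one_mul] at h
    rw [show m = residueSum a b c p₁ p₂ p₃ m by linarith]
    exact residueSum_mem ha hb hc m
  · intro hm
    rw [residueSum_eq_self_of_mem ha hb hc heq hm hlt] at h
    exact mul_right_cancel₀ (by positivity : a * b * c ≠ 0) (by linarith)

lemma delta_eq_indicator_sub_indicator (ha : 0 < a) (hb : 0 < b) (hc : 0 < c)
    (heq : a * b * c * e₀ + p₁ * (b * c) + p₂ * (a * c) + p₃ * (a * b) = -1)
    [DecidablePred (· ∈ semigroup a b c)] {m : ℤ} (hm₀ : 0 ≤ m)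
    (hmN : m ≤ a * b * c - a * b - a * c - b * c) :
    delta a b c e₀ p₁ p₂ p₃ m = (if m ∈ semigroup a b c then 1 else 0) -
      (if a * b * c - a * b - a * c - b * c - m ∈ semigroup a b c then 1 else 0) := by
  have hN : a * b * c - a * b - a * c - b * c < a * b * c := by
    have := mul_pos ha hb; have := mul_pos ha hc; have := mul_pos hb hc; linarith
  have hle := delta_le_one ha hb hc heq (m := m) (by omega)
  have hge := delta_le_one ha hb hc heq (m := a * b * c - a * b - a * c - b * c - m) (by omega)
  have hone := delta_eq_one_iff ha hb hc heq (m := m) (by omega)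
  have hneg := delta_eq_one_iff ha hb hc heq (m := a * b * c - a * b - a * c - b * c - m) (by omega)
  rw [delta_sub ha hb hc heq] at hge hneg
  by_cases hS : m ∈ semigroup a b c <;>
    by_cases hS' : a * b * c - a * b - a * c - b * c - m ∈ semigroup a b c <;>
    simp only [hS, hS', if_true, if_false] <;> rw [← hone] at hS <;> rw [← hneg] at hS' <;> omega

end GradedRoots

open GradedRoots

theorem tau_le_one_general (a b c : ℤ)
    (h1a : 1 < a) (hab' : a < b) (hbc' : b < c)
    (N : ℤ) (hN : N = a * b * c - a * b - a * c - b * c)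
    (e₀ p₁ p₂ p₃ : ℤ)
    (heq : a * b * c * e₀ + p₁ * (b * c) + p₂ * (a * c) + p₃ * (a * b) = -1)
    (Δ : ℕ → ℤ)
    (hΔ : ∀ n : ℕ, Δ n = 1 - e₀ * (n : ℤ)
      - ⌈((p₁ : ℚ) * (n : ℚ)) / (a : ℚ)⌉
      - ⌈((p₂ : ℚ) * (n : ℚ)) / (b : ℚ)⌉
      - ⌈((p₃ : ℚ) * (n : ℚ)) / (c : ℚ)⌉)
    (τ : ℕ → ℤ)
    (hτ : ∀ i : ℕ, τ i = ∑ n ∈ Finset.range i, Δ n)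
    (n : ℕ) (hn : (n : ℤ) ≤ N) :
    τ (n + 1) ≤ 1 := by
  classical
  subst hN
  have ha : 0 < a := by omega
  have hb : 0 < b := by omega
  have hc : 0 < c := by omega
  have hΔS : ∀ m ∈ range (n + 1), Δ m =
      (if ((m : ℕ) : ℤ) ∈ semigroup a b c then 1 else 0) -
        (if a * b * c - a * b - a * c - b * c - (m : ℕ) ∈ semigroup a b c then 1 else 0) := by
    intro m hm
    have hmn : m ≤ n := Nat.lt_succ_iff.mp (mem_range.mp hm)
    rw [← delta_eq_indicator_sub_indicator ha hb hc heq (by positivity) (by omega), hΔ, delta]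
    push_cast
    rfl
  rw [hτ, sum_congr rfl hΔS, sum_sub_distrib, sum_boole, sum_boole]
  have := card_filter_mem_le_card_filter_sub_mem_add_one (semigroup a b c) hn
  omega

/-- The tau function of the graded roots algorithm for `−Σ(a,b,c)`
satisfies `τ(n+1) ≤ 1` for all `0 ≤ n ≤ N`. -/
theorem tau_le_one (a b c : ℤ)
    (hab : IsCoprime a b) (hac : IsCoprime a c) (hbc : IsCoprime b c)
    (h1a : 1 < a) (hab' : a < b) (hbc' : b < c)
    (hne : (a, b, c) ≠ (2, 3, 5))
    (N : ℤ) (hN : N = a * b * c - a * b - a * c - b * c)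
    (e₀ p₁ p₂ p₃ : ℤ)
    (hp₁ : 0 < p₁ ∧ p₁ < a) (hp₂ : 0 < p₂ ∧ p₂ < b) (hp₃ : 0 < p₃ ∧ p₃ < c)
    (heq : a * b * c * e₀ + p₁ * (b * c) + p₂ * (a * c) + p₃ * (a * b) = -1)
    (Δ : ℕ → ℤ)
    (hΔ : ∀ n : ℕ, Δ n = 1 - e₀ * (n : ℤ)
      - ⌈((p₁ : ℚ) * (n : ℚ)) / (a : ℚ)⌉
      - ⌈((p₂ : ℚ) * (n : ℚ)) / (b : ℚ)⌉
      - ⌈((p₃ : ℚ) * (n : ℚ)) / (c : ℚ)⌉)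
    (τ : ℕ → ℤ)
    (hτ : ∀ i : ℕ, τ i = ∑ n ∈ Finset.range i, Δ n)
    (n : ℕ) (hn : (n : ℤ) ≤ N) :
    τ (n + 1) ≤ 1 :=
  tau_le_one_general a b c h1a hab' hbc' N hN e₀ p₁ p₂ p₃ heq Δ hΔ τ hτ n hn
end

section
/- Let a, b, c be pairwise coprime integers with 1 < a < b < c and (a,b,c) ≠ (2,3,5), and set N = abc − ab − ac − bc. Let e₀, p₁, p₂, p₃ be the unique integers with 0 < p₁ < a, 0 < p₂ < b, 0 < p₃ < c and abc·e₀ + p₁·bc + p₂·ac + p₃·ab = −1; define Δ(n) = 1 − e₀·n − ⌈p₁n/a⌉ − ⌈p₂n/b⌉ − ⌈p₃n/c⌉ and τ(i) = Σ_{n=0}^{i−1} Δ(n). Then τ satisfies the symmetry τ(N+1−n) = τ(n) for all integers n with 0 ≤ n ≤ N+1. -/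
lemma ceil_int_div (x a : ℤ) (ha : 0 < a) : ⌈(x : ℚ) / (a : ℚ)⌉ = -((-x) / a) := by
  have ht : ((a.toNat : ℕ) : ℚ) = (a : ℚ) := by exact_mod_cast Int.toNat_of_nonneg ha.le
  have h1 : ((x : ℚ) / (a : ℚ)) = -((((-x) : ℤ) : ℚ) / ((a.toNat : ℕ) : ℚ)) := by
    rw [ht]; push_cast; ring
  rw [h1, Int.ceil_neg, Rat.floor_intCast_div_natCast, Int.toNat_of_nonneg ha.le]

lemma ediv_pair (a x y M : ℤ) (ha : 0 < a) (hxy : x + y = M) (hM : a ∣ M - 1) :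
    -((-x) / a) + -((-y) / a) = (M - 1) / a + 1 := by
  obtain ⟨s, hs⟩ := hM
  have hMs : (M - 1) / a = s := by rw [hs]; exact Int.mul_ediv_cancel_left s ha.ne'
  have hx := Int.mul_ediv_add_emod (-x) a
  have hy := Int.mul_ediv_add_emod (-y) a
  set u := (-x) / a
  set v := (-x) % a
  set w := (-y) / a
  set z := (-y) % a
  have hv0 : 0 ≤ v := Int.emod_nonneg _ ha.ne'
  have hv1 : v < a := Int.emod_lt_of_pos _ ha
  have hz0 : 0 ≤ z := Int.emod_nonneg _ ha.ne'
  have hz1 : z < a := Int.emod_lt_of_pos _ ha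
  have key : a * (u + w + s) = -(v + z) - 1 := by linarith [hs, hx, hy]
  have h1 : u + w + s ≤ -1 := by nlinarith
  have h2 : -2 ≤ u + w + s := by nlinarith
  have h3 : u + w + s = -1 := by nlinarith
  rw [hMs]; linarith

lemma ceil_pair (a x y M : ℤ) (ha : 0 < a) (hxy : x + y = M) (hM : a ∣ M - 1) :
    ⌈(x : ℚ) / (a : ℚ)⌉ + ⌈(y : ℚ) / (a : ℚ)⌉ = (M - 1) / a + 1 := by
  rw [ceil_int_div x a ha, ceil_int_div y a ha]
  exact ediv_pair a x y M ha hxy hM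

/-- The tau function satisfies the symmetry `τ(N+1−n) = τ(n)` for all
`0 ≤ n ≤ N+1` (stated as: `τ m = τ n` whenever `m + n = N + 1` with `m, n ≥ 0`). -/
theorem tau_symmetry (a b c : ℤ)
    (hab : IsCoprime a b) (hac : IsCoprime a c) (hbc : IsCoprime b c)
    (h1a : 1 < a) (hab' : a < b) (hbc' : b < c)
    (hne : (a, b, c) ≠ (2, 3, 5))
    (N : ℤ) (hN : N = a * b * c - a * b - a * c - b * c)
    (e₀ p₁ p₂ p₃ : ℤ)
    (hp₁ : 0 < p₁ ∧ p₁ < a) (hp₂ : 0 < p₂ ∧ p₂ < b) (hp₃ : 0 < p₃ ∧ p₃ < c)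
    (heq : a * b * c * e₀ + p₁ * (b * c) + p₂ * (a * c) + p₃ * (a * b) = -1)
    (Δ : ℕ → ℤ)
    (hΔ : ∀ n : ℕ, Δ n = 1 - e₀ * (n : ℤ)
      - ⌈((p₁ : ℚ) * (n : ℚ)) / (a : ℚ)⌉
      - ⌈((p₂ : ℚ) * (n : ℚ)) / (b : ℚ)⌉
      - ⌈((p₃ : ℚ) * (n : ℚ)) / (c : ℚ)⌉)
    (τ : ℕ → ℤ)
    (hτ : ∀ i : ℕ, τ i = ∑ n ∈ Finset.range i, Δ n) :
    ∀ m n : ℕ, (m : ℤ) + (n : ℤ) = N + 1 → τ m = τ n := by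
  have ha : 0 < a := by linarith
  have hb : 0 < b := by linarith
  have hc : 0 < c := by linarith
  -- divisibilities
  have hda : a ∣ p₁ * N - 1 :=
    ⟨p₁ * b * c - p₁ * b - p₁ * c + b * c * e₀ + p₂ * c + p₃ * b, by
      linear_combination p₁ * hN - heq⟩
  have hdb : b ∣ p₂ * N - 1 :=
    ⟨p₂ * a * c - p₂ * a - p₂ * c + a * c * e₀ + p₁ * c + p₃ * a, by
      linear_combination p₂ * hN - heq⟩
  have hdc : c ∣ p₃ * N - 1 :=
    ⟨p₃ * a * b - p₃ * a - p₃ * b + a * b * e₀ + p₁ * b + p₂ * a, by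
      linear_combination p₃ * hN - heq⟩
  set A := (p₁ * N - 1) / a with hA'
  set B := (p₂ * N - 1) / b with hB'
  set C := (p₃ * N - 1) / c with hC'
  have hA : a * A = p₁ * N - 1 := Int.mul_ediv_cancel' hda
  have hB : b * B = p₂ * N - 1 := Int.mul_ediv_cancel' hdb
  have hC : c * C = p₃ * N - 1 := Int.mul_ediv_cancel' hdc
  have hsum : e₀ * N + A + B + C = -1 := by
    have h0 : a * (b * (c * (e₀ * N + A + B + C + 1))) = 0 := by
      linear_combination N * heq + b * c * hA + a * c * hB + a * b * hC - hN
    have h1 := (mul_eq_zero.mp h0).resolve_left ha.ne'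
    have h2 := (mul_eq_zero.mp h1).resolve_left hb.ne'
    have h3 := (mul_eq_zero.mp h2).resolve_left hc.ne'
    linarith
  -- key antisymmetry of Δ
  have hΔpair : ∀ k j : ℕ, (k : ℤ) + (j : ℤ) = N → Δ k + Δ j = 0 := by
    intro k j hkj
    have hca : ⌈((p₁ : ℚ) * (k : ℚ)) / (a : ℚ)⌉ + ⌈((p₁ : ℚ) * (j : ℚ)) / (a : ℚ)⌉
        = A + 1 := by
      have h := ceil_pair a (p₁ * k) (p₁ * j) (p₁ * N) ha
        (by linear_combination p₁ * hkj)
        (by simpa using hda)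
      push_cast at h
      rw [hA']; convert h using 2
    have hcb : ⌈((p₂ : ℚ) * (k : ℚ)) / (b : ℚ)⌉ + ⌈((p₂ : ℚ) * (j : ℚ)) / (b : ℚ)⌉
        = B + 1 := by
      have h := ceil_pair b (p₂ * k) (p₂ * j) (p₂ * N) hb
        (by linear_combination p₂ * hkj)
        (by simpa using hdb)
      push_cast at h
      rw [hB']; convert h using 2
    have hcc : ⌈((p₃ : ℚ) * (k : ℚ)) / (c : ℚ)⌉ + ⌈((p₃ : ℚ) * (j : ℚ)) / (c : ℚ)⌉
        = C + 1 := by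
      have h := ceil_pair c (p₃ * k) (p₃ * j) (p₃ * N) hc
        (by linear_combination p₃ * hkj)
        (by simpa using hdc)
      push_cast at h
      rw [hC']; convert h using 2
    have he : e₀ * (k : ℤ) + e₀ * (j : ℤ) = e₀ * N := by linear_combination e₀ * hkj
    rw [hΔ k, hΔ j]
    linarith
  have hstep : ∀ k : ℕ, τ (k + 1) = τ k + Δ k := by
    intro k; rw [hτ, hτ, Finset.sum_range_succ]
  have main : ∀ d m n : ℕ, m = n + d → (m : ℤ) + (n : ℤ) = N + 1 → τ m = τ n := by
    intro d
    induction d using Nat.strong_induction_on with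
    | _ d ih =>
      match d with
      | 0 => intro m n hm _; rw [hm, Nat.add_zero]
      | 1 =>
        intro m n hm hmn
        subst hm
        have h2n : (n : ℤ) + (n : ℤ) = N := by push_cast at hmn; linarith
        have hz := hΔpair n n h2n
        rw [hstep n]; linarith
      | (d + 2) =>
        intro m n hm hmn
        subst hm
        have e1 : n + (d + 2) = (n + 1 + d) + 1 := by omega
        rw [e1, hstep (n + 1 + d)]
        have ih1 : τ (n + 1 + d) = τ (n + 1) := by
          apply ih d (by omega) (n + 1 + d) (n + 1) (by omega)
          push_cast at hmn ⊢; linarith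
        have hz : Δ (n + 1 + d) + Δ n = 0 := by
          apply hΔpair
          push_cast at hmn ⊢; linarith
        rw [ih1, hstep n]; linarith
  intro m n hmn
  rcases le_total n m with h | h
  · exact main (m - n) m n (by omega) hmn
  · exact (main (n - m) n m (by omega) (by linarith)).symm
end

section
/- Let a, b, c be pairwise coprime integers with 1 < a < b < c and (a,b,c) ≠ (2,3,5), set N = abc − ab − ac − bc, and let G = {x·bc + y·ac + z·ab : x, y, z nonnegative integers}. Let e₀, p₁, p₂, p₃ be the unique integers with 0 < p₁ < a, 0 < p₂ < b, 0 < p₃ < c and abc·e₀ + p₁·bc + p₂·ac + p₃·ab = −1; define Δ(n) = 1 − e₀·n − ⌈p₁n/a⌉ − ⌈p₂n/b⌉ − ⌈p₃n/c⌉ and τ(i) = Σ_{n=0}^{i−1} Δ(n). Then for every integer n with 0 ≤ n ≤ N, τ(n+1) = |G ∩ [0,n]| − |G ∩ [N−n, N]|, where |S| denotes the cardinality of the finite set S. -/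
private lemma ceil_mul_aux (q A : ℤ) (hA : 0 < A) :
    (⌈(q : ℚ) / (A : ℚ)⌉ : ℤ) * A = q + (-q) % A := by
  have h1 : ⌈(q : ℚ) / (A : ℚ)⌉ = -((-q) / A) := by
    have h2 : -((q : ℚ) / (A : ℚ)) = (((-q : ℤ)) : ℚ) / ((A.toNat : ℕ) : ℚ) := by
      have h3 : ((A.toNat : ℕ) : ℚ) = ((A : ℤ) : ℚ) := by
        exact_mod_cast congrArg (Int.cast : ℤ → ℚ) (Int.toNat_of_nonneg hA.le)
      rw [h3]; push_cast; ring
    rw [← neg_neg (⌈(q : ℚ) / (A : ℚ)⌉), ← Int.floor_neg, h2,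
      Rat.floor_intCast_div_natCast, Int.toNat_of_nonneg hA.le]
  have h3 := Int.emod_add_mul_ediv (-q) A
  rw [h1]
  linear_combination -h3

private lemma memG_aux (a b c p₁ p₂ p₃ : ℤ)
    (ha : 0 < a) (hb : 0 < b) (hc : 0 < c)
    (h1 : a ∣ p₁ * (b * c) + 1) (h2 : b ∣ p₂ * (a * c) + 1) (h3 : c ∣ p₃ * (a * b) + 1)
    (t E x y z : ℤ) (hx0 : 0 ≤ x) (hxa : x < a) (hy0 : 0 ≤ y) (hyb : y < b)
    (hz0 : 0 ≤ z) (hzc : z < c)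
    (ht : t = E * (a * b * c) + x * (b * c) + y * (a * c) + z * (a * b)) :
    (∃ X Y Z : ℕ, t = (X : ℤ) * (b * c) + (Y : ℤ) * (a * c) + (Z : ℤ) * (a * b)) ↔ 0 ≤ E := by
  constructor
  · rintro ⟨X, Y, Z, hXYZ⟩
    have da : a ∣ ((X : ℤ) - x) * (b * c) :=
      ⟨E * (b * c) + (y - (Y : ℤ)) * c + (z - (Z : ℤ)) * b, by linear_combination ht - hXYZ⟩
    have dX : a ∣ ((X : ℤ) - x) := by
      have H := dvd_sub (h1.mul_left ((X : ℤ) - x)) (da.mul_right p₁)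
      have hr : ((X : ℤ) - x) * (p₁ * (b * c) + 1) - ((X : ℤ) - x) * (b * c) * p₁
          = (X : ℤ) - x := by ring
      rwa [hr] at H
    obtain ⟨u, hu⟩ := dX
    have hXnn : (0 : ℤ) ≤ (X : ℤ) := Int.natCast_nonneg X
    have hu0 : 0 ≤ u := by nlinarith
    have db : b ∣ ((Y : ℤ) - y) * (a * c) :=
      ⟨E * (a * c) + (x - (X : ℤ)) * c + (z - (Z : ℤ)) * a, by linear_combination ht - hXYZ⟩
    have dY : b ∣ ((Y : ℤ) - y) := by
      have H := dvd_sub (h2.mul_left ((Y : ℤ) - y)) (db.mul_right p₂)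
      have hr : ((Y : ℤ) - y) * (p₂ * (a * c) + 1) - ((Y : ℤ) - y) * (a * c) * p₂
          = (Y : ℤ) - y := by ring
      rwa [hr] at H
    obtain ⟨v, hv⟩ := dY
    have hYnn : (0 : ℤ) ≤ (Y : ℤ) := Int.natCast_nonneg Y
    have hv0 : 0 ≤ v := by nlinarith
    have dc : c ∣ ((Z : ℤ) - z) * (a * b) :=
      ⟨E * (a * b) + (x - (X : ℤ)) * b + (y - (Y : ℤ)) * a, by linear_combination ht - hXYZ⟩
    have dZ : c ∣ ((Z : ℤ) - z) := by
      have H := dvd_sub (h3.mul_left ((Z : ℤ) - z)) (dc.mul_right p₃)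
      have hr : ((Z : ℤ) - z) * (p₃ * (a * b) + 1) - ((Z : ℤ) - z) * (a * b) * p₃
          = (Z : ℤ) - z := by ring
      rwa [hr] at H
    obtain ⟨w, hw⟩ := dZ
    have hZnn : (0 : ℤ) ≤ (Z : ℤ) := Int.natCast_nonneg Z
    have hw0 : 0 ≤ w := by nlinarith
    have habc : (0 : ℤ) < a * b * c := by positivity
    have hE : E * (a * b * c) = (u + v + w) * (a * b * c) := by
      linear_combination hXYZ - ht + (b * c) * hu + (a * c) * hv + (a * b) * hw
    have hE' : E = u + v + w := mul_right_cancel₀ habc.ne' hE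
    omega
  · intro hE
    refine ⟨(x + E * a).toNat, y.toNat, z.toNat, ?_⟩
    rw [Int.toNat_of_nonneg (add_nonneg hx0 (mul_nonneg hE ha.le)),
      Int.toNat_of_nonneg hy0, Int.toNat_of_nonneg hz0]
    linear_combination ht

/-- For `0 ≤ n ≤ N`, `τ(n+1) = |G ∩ [0,n]| − |G ∩ [N−n, N]|`. -/
theorem tau_eq_card_difference (a b c : ℤ)
    (hab : IsCoprime a b) (hac : IsCoprime a c) (hbc : IsCoprime b c)
    (h1a : 1 < a) (hab' : a < b) (hbc' : b < c)
    (hne : (a, b, c) ≠ (2, 3, 5))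
    (N : ℤ) (hN : N = a * b * c - a * b - a * c - b * c)
    (e₀ p₁ p₂ p₃ : ℤ)
    (hp₁ : 0 < p₁ ∧ p₁ < a) (hp₂ : 0 < p₂ ∧ p₂ < b) (hp₃ : 0 < p₃ ∧ p₃ < c)
    (heq : a * b * c * e₀ + p₁ * (b * c) + p₂ * (a * c) + p₃ * (a * b) = -1)
    (Δ : ℕ → ℤ)
    (hΔ : ∀ n : ℕ, Δ n = 1 - e₀ * (n : ℤ)
      - ⌈((p₁ : ℚ) * (n : ℚ)) / (a : ℚ)⌉
      - ⌈((p₂ : ℚ) * (n : ℚ)) / (b : ℚ)⌉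
      - ⌈((p₃ : ℚ) * (n : ℚ)) / (c : ℚ)⌉)
    (τ : ℕ → ℤ)
    (hτ : ∀ i : ℕ, τ i = ∑ n ∈ Finset.range i, Δ n)
    (n : ℕ) (hn : (n : ℤ) ≤ N) :
    τ (n + 1) =
      ({m : ℤ | (∃ x y z : ℕ, m = (x : ℤ) * (b * c) + (y : ℤ) * (a * c) + (z : ℤ) * (a * b)) ∧
          0 ≤ m ∧ m ≤ (n : ℤ)}.ncard : ℤ) -
      ({m : ℤ | (∃ x y z : ℕ, m = (x : ℤ) * (b * c) + (y : ℤ) * (a * c) + (z : ℤ) * (a * b)) ∧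
          N - (n : ℤ) ≤ m ∧ m ≤ N}.ncard : ℤ) := by
  classical
  obtain ⟨hp₁0, hp₁a⟩ := hp₁
  obtain ⟨hp₂0, hp₂b⟩ := hp₂
  obtain ⟨hp₃0, hp₃c⟩ := hp₃
  have ha : (0 : ℤ) < a := by linarith
  have hb : (0 : ℤ) < b := by linarith
  have hc : (0 : ℤ) < c := by linarith
  have h1 : a ∣ p₁ * (b * c) + 1 := ⟨-(b * c * e₀) - p₂ * c - p₃ * b, by linear_combination heq⟩
  have h2 : b ∣ p₂ * (a * c) + 1 := ⟨-(a * c * e₀) - p₁ * c - p₃ * a, by linear_combination heq⟩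
  have h3 : c ∣ p₃ * (a * b) + 1 := ⟨-(a * b * e₀) - p₁ * b - p₂ * a, by linear_combination heq⟩
  have key : ∀ m : ℕ, (m : ℤ) ≤ N →
      Δ m = (if ∃ X Y Z : ℕ, (m : ℤ) = (X : ℤ) * (b * c) + (Y : ℤ) * (a * c) + (Z : ℤ) * (a * b)
              then (1 : ℤ) else 0)
          - (if ∃ X Y Z : ℕ, N - (m : ℤ) = (X : ℤ) * (b * c) + (Y : ℤ) * (a * c) + (Z : ℤ) * (a * b)
              then (1 : ℤ) else 0) := by
    intro m hm
    set x : ℤ := (-(p₁ * (m : ℤ))) % a with hxd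
    set y : ℤ := (-(p₂ * (m : ℤ))) % b with hyd
    set z : ℤ := (-(p₃ * (m : ℤ))) % c with hzd
    have hx0 : 0 ≤ x := Int.emod_nonneg _ ha.ne'
    have hxa : x < a := Int.emod_lt_of_pos _ ha
    have hy0 : 0 ≤ y := Int.emod_nonneg _ hb.ne'
    have hyb : y < b := Int.emod_lt_of_pos _ hb
    have hz0 : 0 ≤ z := Int.emod_nonneg _ hc.ne'
    have hzc : z < c := Int.emod_lt_of_pos _ hc
    have c1 : (⌈((p₁ : ℚ) * (m : ℚ)) / (a : ℚ)⌉ : ℤ) * a = p₁ * (m : ℤ) + x := by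
      have h := ceil_mul_aux (p₁ * (m : ℤ)) a ha
      rw [← hxd] at h
      push_cast at h ⊢
      exact_mod_cast h
    have c2 : (⌈((p₂ : ℚ) * (m : ℚ)) / (b : ℚ)⌉ : ℤ) * b = p₂ * (m : ℤ) + y := by
      have h := ceil_mul_aux (p₂ * (m : ℤ)) b hb
      rw [← hyd] at h
      push_cast at h ⊢
      exact_mod_cast h
    have c3 : (⌈((p₃ : ℚ) * (m : ℚ)) / (c : ℚ)⌉ : ℤ) * c = p₃ * (m : ℤ) + z := by
      have h := ceil_mul_aux (p₃ * (m : ℤ)) c hc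
      rw [← hzd] at h
      push_cast at h ⊢
      exact_mod_cast h
    have hD := hΔ m
    have he : (Δ m - 1) * (a * b * c) = (m : ℤ) - x * (b * c) - y * (a * c) - z * (a * b) := by
      linear_combination (a * b * c) * hD - (b * c) * c1 - (a * c) * c2 - (a * b) * c3
        - (m : ℤ) * heq
    have habc : (0 : ℤ) < a * b * c := by positivity
    have hmnn : (0 : ℤ) ≤ (m : ℤ) := Int.natCast_nonneg m
    have hxbc : (0 : ℤ) ≤ x * (b * c) := mul_nonneg hx0 (by positivity)
    have hyac : (0 : ℤ) ≤ y * (a * c) := mul_nonneg hy0 (by positivity)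
    have hzab : (0 : ℤ) ≤ z * (a * b) := mul_nonneg hz0 (by positivity)
    have hEle : Δ m - 1 ≤ 0 := by
      by_contra h
      push_neg at h
      have h1' : (1 : ℤ) ≤ Δ m - 1 := h
      have hge : a * b * c ≤ (Δ m - 1) * (a * b * c) := le_mul_of_one_le_left habc.le h1'
      linarith [mul_pos ha hb, mul_pos ha hc, mul_pos hb hc]
    have hEge : (-2 : ℤ) ≤ Δ m - 1 := by
      by_contra h
      push_neg at h
      have h1' : Δ m - 1 ≤ -3 := by omega
      have hle : (Δ m - 1) * (a * b * c) ≤ -3 * (a * b * c) :=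
        mul_le_mul_of_nonneg_right h1' habc.le
      have e1 : x * (b * c) ≤ a * b * c - b * c := by
        have h' := mul_le_mul_of_nonneg_right (show x ≤ a - 1 by omega) (mul_pos hb hc).le
        have hr : (a - 1) * (b * c) = a * b * c - b * c := by ring
        rw [hr] at h'
        exact h'
      have e2 : y * (a * c) ≤ a * b * c - a * c := by
        have h' := mul_le_mul_of_nonneg_right (show y ≤ b - 1 by omega) (mul_pos ha hc).le
        have hr : (b - 1) * (a * c) = a * b * c - a * c := by ring
        rw [hr] at h'
        exact h'
      have e3 : z * (a * b) ≤ a * b * c - a * b := by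
        have h' := mul_le_mul_of_nonneg_right (show z ≤ c - 1 by omega) (mul_pos ha hb).le
        have hr : (c - 1) * (a * b) = a * b * c - a * b := by ring
        rw [hr] at h'
        exact h'
      linarith [mul_pos ha hb, mul_pos ha hc, mul_pos hb hc]
    have hiff1 : (∃ X Y Z : ℕ,
        (m : ℤ) = (X : ℤ) * (b * c) + (Y : ℤ) * (a * c) + (Z : ℤ) * (a * b)) ↔ 0 ≤ Δ m - 1 :=
      memG_aux a b c p₁ p₂ p₃ ha hb hc h1 h2 h3 (m : ℤ) (Δ m - 1) x y z hx0 hxa hy0 hyb hz0 hzc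
        (by linear_combination -he)
    have hiff2 : (∃ X Y Z : ℕ,
        N - (m : ℤ) = (X : ℤ) * (b * c) + (Y : ℤ) * (a * c) + (Z : ℤ) * (a * b)) ↔
        0 ≤ -(Δ m - 1) - 2 :=
      memG_aux a b c p₁ p₂ p₃ ha hb hc h1 h2 h3 (N - (m : ℤ)) (-(Δ m - 1) - 2)
        (a - 1 - x) (b - 1 - y) (c - 1 - z)
        (by omega) (by omega) (by omega) (by omega) (by omega) (by omega)
        (by linear_combination hN + he)
    rw [if_congr hiff1 rfl rfl, if_congr hiff2 rfl rfl]
    split_ifs with h4 h5 h5 <;> omega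
  rw [hτ]
  have hsum : ∑ m ∈ Finset.range (n + 1), Δ m
      = ∑ m ∈ Finset.range (n + 1),
        ((if ∃ X Y Z : ℕ, (m : ℤ) = (X : ℤ) * (b * c) + (Y : ℤ) * (a * c) + (Z : ℤ) * (a * b)
            then (1 : ℤ) else 0)
        - (if ∃ X Y Z : ℕ, N - (m : ℤ) = (X : ℤ) * (b * c) + (Y : ℤ) * (a * c) + (Z : ℤ) * (a * b)
            then (1 : ℤ) else 0)) := by
    refine Finset.sum_congr rfl fun m hm' => key m ?_
    have hmn : m ≤ n := Nat.lt_succ_iff.mp (Finset.mem_range.mp hm')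
    have : (m : ℤ) ≤ (n : ℤ) := by exact_mod_cast hmn
    linarith
  rw [hsum, Finset.sum_sub_distrib, Finset.sum_boole, Finset.sum_boole]
  have hinj1 : Function.Injective (fun k : ℕ => (k : ℤ)) := fun k1 k2 h => by simpa using h
  have hinj2 : Function.Injective (fun k : ℕ => N - (k : ℤ)) := by
    intro k1 k2 h
    simp only at h
    omega
  have hset1 : {m : ℤ | (∃ x y z : ℕ,
        m = (x : ℤ) * (b * c) + (y : ℤ) * (a * c) + (z : ℤ) * (a * b)) ∧ 0 ≤ m ∧ m ≤ (n : ℤ)} =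
      ↑(((Finset.range (n + 1)).filter (fun k : ℕ =>
        ∃ X Y Z : ℕ, (k : ℤ) = (X : ℤ) * (b * c) + (Y : ℤ) * (a * c) + (Z : ℤ) * (a * b))).image
        (fun k : ℕ => (k : ℤ))) := by
    ext m
    simp only [Finset.coe_image, Finset.coe_filter, Finset.mem_range, Set.mem_image,
      Set.mem_setOf_eq, Nat.lt_succ_iff]
    constructor
    · rintro ⟨hPm, hm0, hmn⟩
      refine ⟨m.toNat, ⟨by omega, ?_⟩, Int.toNat_of_nonneg hm0⟩
      rwa [Int.toNat_of_nonneg hm0]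
    · rintro ⟨k, ⟨hk, hPk⟩, rfl⟩
      exact ⟨hPk, Int.natCast_nonneg k, by exact_mod_cast hk⟩
  have hset2 : {m : ℤ | (∃ x y z : ℕ,
        m = (x : ℤ) * (b * c) + (y : ℤ) * (a * c) + (z : ℤ) * (a * b)) ∧
        N - (n : ℤ) ≤ m ∧ m ≤ N} =
      ↑(((Finset.range (n + 1)).filter (fun k : ℕ =>
        ∃ X Y Z : ℕ, N - (k : ℤ) = (X : ℤ) * (b * c) + (Y : ℤ) * (a * c) + (Z : ℤ) * (a * b))).image
        (fun k : ℕ => N - (k : ℤ))) := by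
    ext m
    simp only [Finset.coe_image, Finset.coe_filter, Finset.mem_range, Set.mem_image,
      Set.mem_setOf_eq, Nat.lt_succ_iff]
    constructor
    · rintro ⟨hPm, hm0, hmn⟩
      refine ⟨(N - m).toNat, ⟨by omega, ?_⟩, by omega⟩
      rw [Int.toNat_of_nonneg (by omega : (0 : ℤ) ≤ N - m), sub_sub_cancel]
      exact hPm
    · rintro ⟨k, ⟨hk, hPk⟩, rfl⟩
      have : (k : ℤ) ≤ (n : ℤ) := by exact_mod_cast hk
      exact ⟨hPk, by omega, by omega⟩
  rw [hset1, hset2, Set.ncard_coe_finset, Set.ncard_coe_finset,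
    Finset.card_image_of_injective _ hinj1, Finset.card_image_of_injective _ hinj2]
end

section
/- Let a, b, c be pairwise coprime integers with 1 < a < b < c satisfying 1/a + 3/b − 1/c > 1. Then exactly one of the following holds: (a,b) = (3,4) and c > 12; or (a,b) = (2,5) and c > 10; or (a,b) = (2,3) and c > 3. -/
/-- If pairwise coprime `1 < a < b < c` satisfy `1/a + 3/b − 1/c > 1`, then
exactly one of the following holds: `(a,b) = (3,4)` and `c > 12`; `(a,b) = (2,5)` and
`c > 10`; `(a,b) = (2,3)` and `c > 3`. (The three cases are mutually exclusive since they
specify different values of `(a,b)`.) -/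
theorem condition_classification (a b c : ℤ)
    (hab : IsCoprime a b) (hac : IsCoprime a c) (hbc : IsCoprime b c)
    (h1a : 1 < a) (hab' : a < b) (hbc' : b < c)
    (hin : 1 < (1 : ℚ) / (a : ℚ) + 3 / (b : ℚ) - 1 / (c : ℚ)) :
    (a = 3 ∧ b = 4 ∧ 12 < c) ∨ (a = 2 ∧ b = 5 ∧ 10 < c) ∨ (a = 2 ∧ b = 3 ∧ 3 < c) := by
  have haq : (1:ℚ) < (a:ℚ) := by exact_mod_cast h1a
  have hbq : (a:ℚ) < (b:ℚ) := by exact_mod_cast hab'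
  have hcq : (b:ℚ) < (c:ℚ) := by exact_mod_cast hbc'
  have ha0 : (0:ℚ) < (a:ℚ) := by linarith
  have hb0 : (0:ℚ) < (b:ℚ) := by linarith
  have hc0 : (0:ℚ) < (c:ℚ) := by linarith
  have hcinv : (0:ℚ) < 1 / (c:ℚ) := by positivity
  have h1 : 1 < 1 / (a:ℚ) + 3 / (b:ℚ) := by linarith
  -- a < 4
  have ha4 : a < 4 := by
    by_contra h
    push_neg at h
    have h4 : (4:ℚ) ≤ (a:ℚ) := by exact_mod_cast h
    have h5 : (5:ℚ) ≤ (b:ℚ) := by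
      have : (5:ℤ) ≤ b := by omega
      exact_mod_cast this
    have e1 : 1 / (a:ℚ) ≤ 1/4 := by
      rw [div_le_div_iff₀ ha0 (by norm_num)]; linarith
    have e2 : 3 / (b:ℚ) ≤ 3/5 := by
      rw [div_le_div_iff₀ hb0 (by norm_num)]; linarith
    linarith
  interval_cases a
  · -- a = 2
    have hb6 : b < 6 := by
      by_contra h
      push_neg at h
      have h6 : (6:ℚ) ≤ (b:ℚ) := by exact_mod_cast h
      have e2 : 3 / (b:ℚ) ≤ 1/2 := by
        rw [div_le_div_iff₀ hb0 (by norm_num)]; linarith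
      norm_num at h1
      linarith
    interval_cases b
    · -- b = 3
      right; right
      refine ⟨rfl, rfl, ?_⟩
      omega
    · -- b = 4 : contradicts coprimality
      exfalso
      rw [Int.isCoprime_iff_gcd_eq_one] at hab
      norm_num at hab
    · -- b = 5
      right; left
      refine ⟨rfl, rfl, ?_⟩
      have hcc : (c:ℚ) * (c:ℚ)⁻¹ = 1 := mul_inv_cancel₀ (by positivity)
      have : (10:ℚ) < (c:ℚ) := by
        norm_num at hin
        nlinarith
      exact_mod_cast this
  · -- a = 3
    have hb5 : b < 5 := by
      by_contra h
      push_neg at h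
      have h5 : (5:ℚ) ≤ (b:ℚ) := by exact_mod_cast h
      have e2 : 3 / (b:ℚ) ≤ 3/5 := by
        rw [div_le_div_iff₀ hb0 (by norm_num)]; linarith
      norm_num at h1
      linarith
    interval_cases b
    -- b = 4
    left
    refine ⟨rfl, rfl, ?_⟩
    have hcc : (c:ℚ) * (c:ℚ)⁻¹ = 1 := mul_inv_cancel₀ (by positivity)
    have : (12:ℚ) < (c:ℚ) := by
      norm_num at hin
      nlinarith
    exact_mod_cast this
end

section
/- Let a, b, c be pairwise coprime integers with 1 < a < b < c, set N = abc − ab − ac − bc, let G = {x·bc + y·ac + z·ab : x, y, z nonnegative integers}, and let κ(a,b,c) = |G ∩ [0,N]|. Let τ₁(a,b,c) denote the number of integer triples (x,y,z) with 0 < x < a, 0 < y < b, 0 < z < c and x/a + y/b + z/c < 1 (equivalently x·bc + y·ac + z·ab < abc). Then τ₁(a,b,c) = κ(a,b,c). -/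
set_option maxHeartbeats 2000000 in
/-- `τ₁(a,b,c) = κ(a,b,c)`: the number of integer triples `(x,y,z)` with
`0 < x < a`, `0 < y < b`, `0 < z < c` and `x·bc + y·ac + z·ab < abc` equals the
cardinality of `G ∩ [0,N]`. -/
theorem tau1_eq_kappa (a b c : ℤ)
    (hab : IsCoprime a b) (hac : IsCoprime a c) (hbc : IsCoprime b c)
    (h1a : 1 < a) (hab' : a < b) (hbc' : b < c)
    (N : ℤ) (hN : N = a * b * c - a * b - a * c - b * c) :
    {t : ℤ × ℤ × ℤ | 0 < t.1 ∧ t.1 < a ∧ 0 < t.2.1 ∧ t.2.1 < b ∧ 0 < t.2.2 ∧ t.2.2 < c ∧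
        t.1 * (b * c) + t.2.1 * (a * c) + t.2.2 * (a * b) < a * b * c}.ncard =
    {m : ℤ | (∃ x y z : ℕ, m = (x : ℤ) * (b * c) + (y : ℤ) * (a * c) + (z : ℤ) * (a * b)) ∧
        0 ≤ m ∧ m ≤ N}.ncard := by
  have ha : (0:ℤ) < a := by linarith
  have hb : (0:ℤ) < b := by linarith
  have hc : (0:ℤ) < c := by linarith
  have habc : IsCoprime a (b * c) := hab.mul_right hac
  set S : Set (ℤ × ℤ × ℤ) :=
    {t : ℤ × ℤ × ℤ | 0 < t.1 ∧ t.1 < a ∧ 0 < t.2.1 ∧ t.2.1 < b ∧ 0 < t.2.2 ∧ t.2.2 < c ∧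
        t.1 * (b * c) + t.2.1 * (a * c) + t.2.2 * (a * b) < a * b * c} with hS
  set K : Set ℤ :=
    {m : ℤ | (∃ x y z : ℕ, m = (x : ℤ) * (b * c) + (y : ℤ) * (a * c) + (z : ℤ) * (a * b)) ∧
        0 ≤ m ∧ m ≤ N} with hK
  set f : ℤ × ℤ × ℤ → ℤ :=
    fun t => (t.1 - 1) * (b * c) + (t.2.1 - 1) * (a * c) + (t.2.2 - 1) * (a * b) with hf
  have hinj : Set.InjOn f S := by
    rintro ⟨x₁, y₁, z₁⟩ ⟨hx1, hxa1, hy1, hyb1, hz1, hzc1, -⟩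
      ⟨x₂, y₂, z₂⟩ ⟨hx2, hxa2, hy2, hyb2, hz2, hzc2, -⟩ heq
    simp only [hf] at heq
    have h1 : (x₁ - x₂) * (b * c) = a * ((y₂ - y₁) * c + (z₂ - z₁) * b) := by
      linear_combination heq
    have hdx : a ∣ (x₁ - x₂) :=
      habc.dvd_of_dvd_mul_right ⟨(y₂ - y₁) * c + (z₂ - z₁) * b, h1⟩
    have hx : x₁ = x₂ := by
      have := Int.eq_zero_of_abs_lt_dvd hdx (abs_lt.mpr ⟨by linarith, by linarith⟩)
      linarith
    subst hx
    have h2' : a * ((y₁ - y₂) * c) = a * ((z₂ - z₁) * b) := by linear_combination heq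
    have h2 : (y₁ - y₂) * c = (z₂ - z₁) * b := mul_left_cancel₀ ha.ne' h2'
    have hdy : b ∣ (y₁ - y₂) :=
      hbc.dvd_of_dvd_mul_right ⟨z₂ - z₁, by linear_combination h2⟩
    have hy : y₁ = y₂ := by
      have := Int.eq_zero_of_abs_lt_dvd hdy (abs_lt.mpr ⟨by linarith, by linarith⟩)
      linarith
    subst hy
    have hz : z₁ = z₂ := by
      have h3 : (z₂ - z₁) * b = 0 := by linear_combination -h2
      have := mul_eq_zero.mp h3
      rcases this with h | h
      · linarith
      · exact absurd h hb.ne'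
    subst hz
    rfl
  have himg : f '' S = K := by
    ext m
    constructor
    · rintro ⟨⟨x, y, z⟩, ⟨hx0, hxa, hy0, hyb, hz0, hzc, hsum⟩, rfl⟩
      simp only [hf]
      refine ⟨⟨(x - 1).toNat, (y - 1).toNat, (z - 1).toNat, ?_⟩, ?_, ?_⟩
      · rw [Int.toNat_of_nonneg (by linarith), Int.toNat_of_nonneg (by linarith),
          Int.toNat_of_nonneg (by linarith)]
      · have h1 : 0 ≤ (x - 1) * (b * c) := mul_nonneg (by linarith) (by positivity)
        have h2 : 0 ≤ (y - 1) * (a * c) := mul_nonneg (by linarith) (by positivity)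
        have h3 : 0 ≤ (z - 1) * (a * b) := mul_nonneg (by linarith) (by positivity)
        linarith
      · have hid : (x - 1) * (b * c) + (y - 1) * (a * c) + (z - 1) * (a * b)
            = x * (b * c) + y * (a * c) + z * (a * b) - a * b - a * c - b * c := by ring
        rw [hid, hN]
        linarith
    · rintro ⟨⟨X, Y, Z, hm⟩, hm0, hmN⟩
      -- reduce coefficients
      set x₀ : ℤ := (X : ℤ) % a with hx₀
      set y₀ : ℤ := (Y : ℤ) % b with hy₀
      set z₀ : ℤ := (Z : ℤ) % c with hz₀
      have hx0 : 0 ≤ x₀ := Int.emod_nonneg _ ha.ne'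
      have hy0 : 0 ≤ y₀ := Int.emod_nonneg _ hb.ne'
      have hz0 : 0 ≤ z₀ := Int.emod_nonneg _ hc.ne'
      have hxa : x₀ < a := Int.emod_lt_of_pos _ ha
      have hyb : y₀ < b := Int.emod_lt_of_pos _ hb
      have hzc : z₀ < c := Int.emod_lt_of_pos _ hc
      set qx : ℤ := (X : ℤ) / a with hqx
      set qy : ℤ := (Y : ℤ) / b with hqy
      set qz : ℤ := (Z : ℤ) / c with hqz
      have hqx0 : 0 ≤ qx := Int.ediv_nonneg (Int.natCast_nonneg X) ha.le
      have hqy0 : 0 ≤ qy := Int.ediv_nonneg (Int.natCast_nonneg Y) hb.le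
      have hqz0 : 0 ≤ qz := Int.ediv_nonneg (Int.natCast_nonneg Z) hc.le
      have hX : (X : ℤ) = a * qx + x₀ := (Int.mul_ediv_add_emod (X : ℤ) a).symm
      have hY : (Y : ℤ) = b * qy + y₀ := (Int.mul_ediv_add_emod (Y : ℤ) b).symm
      have hZ : (Z : ℤ) = c * qz + z₀ := (Int.mul_ediv_add_emod (Z : ℤ) c).symm
      have hmdec : m = x₀ * (b * c) + y₀ * (a * c) + z₀ * (a * b)
          + (qx + qy + qz) * (a * b * c) := by
        rw [hm, hX, hY, hZ]; ring
      have hnn1 : 0 ≤ x₀ * (b * c) := mul_nonneg hx0 (by positivity)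
      have hnn2 : 0 ≤ y₀ * (a * c) := mul_nonneg hy0 (by positivity)
      have hnn3 : 0 ≤ z₀ * (a * b) := mul_nonneg hz0 (by positivity)
      have habc' : (0:ℤ) < a * b * c := by positivity
      have hw : qx + qy + qz = 0 := by
        have h1 : (qx + qy + qz) * (a * b * c) ≤ m := by linarith
        have h2 : (qx + qy + qz) * (a * b * c) < 1 * (a * b * c) := by
          have hab0 : (0:ℤ) < a * b := by positivity
          have hac0 : (0:ℤ) < a * c := by positivity
          have hbc0 : (0:ℤ) < b * c := by positivity
          rw [one_mul]; rw [hN] at hmN; linarith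
        have h3 : qx + qy + qz < 1 := lt_of_mul_lt_mul_right h2 habc'.le
        linarith
      have hmeq : m = x₀ * (b * c) + y₀ * (a * c) + z₀ * (a * b) := by
        rw [hmdec, hw]; ring
      -- bounds: x₀ < a - 1, etc.
      have hxa1 : x₀ < a - 1 := by
        have h1 : x₀ * (b * c) < (a - 1) * (b * c) := by
          have hab0 : 0 < a * b := by positivity
          have hac0 : 0 < a * c := by positivity
          nlinarith
        exact lt_of_mul_lt_mul_right h1 (by positivity)
      have hyb1 : y₀ < b - 1 := by
        have h1 : y₀ * (a * c) < (b - 1) * (a * c) := by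
          have hab0 : 0 < a * b := by positivity
          have hbc0 : 0 < b * c := by positivity
          nlinarith
        exact lt_of_mul_lt_mul_right h1 (by positivity)
      have hzc1 : z₀ < c - 1 := by
        have h1 : z₀ * (a * b) < (c - 1) * (a * b) := by
          have hac0 : 0 < a * c := by positivity
          have hbc0 : 0 < b * c := by positivity
          nlinarith
        exact lt_of_mul_lt_mul_right h1 (by positivity)
      -- m ≠ N
      have hmne : m ≠ N := by
        intro hmn
        have h1 : (x₀ + 1) * (b * c)
            = a * (b * c - b - c - y₀ * c - z₀ * b) := by
          have := hmeq.symm.trans hmn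
          rw [hN] at this
          linear_combination this
        have hdx : a ∣ (x₀ + 1) := habc.dvd_of_dvd_mul_right ⟨_, h1⟩
        have := Int.eq_zero_of_abs_lt_dvd hdx (abs_lt.mpr ⟨by linarith, by linarith⟩)
        linarith
      have hmN' : m < N := lt_of_le_of_ne hmN hmne
      refine ⟨(x₀ + 1, y₀ + 1, z₀ + 1), ?_, ?_⟩
      · simp only [hS, Set.mem_setOf_eq]
        refine ⟨by linarith, by linarith, by linarith, by linarith, by linarith, by linarith, ?_⟩
        have hid : (x₀ + 1) * (b * c) + (y₀ + 1) * (a * c) + (z₀ + 1) * (a * b)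
            = m + a * b + a * c + b * c := by rw [hmeq]; ring
        rw [hid]
        rw [hN] at hmN'
        linarith
      · simp only [hf]
        rw [hmeq]; ring
  rw [← himg, Set.ncard_image_of_injOn hinj]
end

section
/- Let a, b, c be pairwise coprime integers with 1 < a < b < c, set N = abc − ab − ac − bc, let G = {x·bc + y·ac + z·ab : x, y, z nonnegative integers}, and let κ(a,b,c) = |G ∩ [0,N]|. Then κ(a,b,c) equals the number of triples (x,y,z) of nonnegative integers with x·bc + y·ac + z·ab ≤ N, and also equals the number of triples (x,y,z) of nonnegative integers with x·bc + y·ac + z·ab < N. -/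
/-- `κ(a,b,c) = |G ∩ [0,N]|` equals the number of triples `(x,y,z)` of
nonnegative integers with `x·bc + y·ac + z·ab ≤ N`, and also equals the number of such
triples with `x·bc + y·ac + z·ab < N`. -/
theorem kappa_eq_counts (a b c : ℤ)
    (hab : IsCoprime a b) (hac : IsCoprime a c) (hbc : IsCoprime b c)
    (h1a : 1 < a) (hab' : a < b) (hbc' : b < c)
    (N : ℤ) (hN : N = a * b * c - a * b - a * c - b * c) :
    {m : ℤ | (∃ x y z : ℕ, m = (x : ℤ) * (b * c) + (y : ℤ) * (a * c) + (z : ℤ) * (a * b)) ∧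
        0 ≤ m ∧ m ≤ N}.ncard =
      {t : ℕ × ℕ × ℕ |
        (t.1 : ℤ) * (b * c) + (t.2.1 : ℤ) * (a * c) + (t.2.2 : ℤ) * (a * b) ≤ N}.ncard ∧
    {m : ℤ | (∃ x y z : ℕ, m = (x : ℤ) * (b * c) + (y : ℤ) * (a * c) + (z : ℤ) * (a * b)) ∧
        0 ≤ m ∧ m ≤ N}.ncard =
      {t : ℕ × ℕ × ℕ |
        (t.1 : ℤ) * (b * c) + (t.2.1 : ℤ) * (a * c) + (t.2.2 : ℤ) * (a * b) < N}.ncard := by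
  have ha0 : (0:ℤ) < a := lt_trans one_pos h1a
  have hb0 : (0:ℤ) < b := lt_trans ha0 hab'
  have hc0 : (0:ℤ) < c := lt_trans hb0 hbc'
  have hbc0 : (0:ℤ) < b * c := mul_pos hb0 hc0
  have hac0 : (0:ℤ) < a * c := mul_pos ha0 hc0
  have hab0 : (0:ℤ) < a * b := mul_pos ha0 hb0
  have e1 : a * (b * c) = a * b * c := by ring
  have e2 : b * (a * c) = a * b * c := by ring
  have e3 : c * (a * b) = a * b * c := by ring
  have habc0 : (0:ℤ) < a * b * c := mul_pos hab0 hc0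
  have hNlt : N < a * (b * c) := by rw [hN, e1]; linarith
  have hNlt' : N < b * (a * c) := by rw [hN, e2]; linarith
  set f : ℕ × ℕ × ℕ → ℤ :=
    fun t => (t.1 : ℤ) * (b * c) + (t.2.1 : ℤ) * (a * c) + (t.2.2 : ℤ) * (a * b) with hf
  -- f never hits N
  have hnotN : ∀ t : ℕ × ℕ × ℕ, f t ≠ N := by
    rintro ⟨x, y, z⟩ h
    simp only [hf] at h
    rw [hN] at h
    have key : ((x:ℤ) + 1) * (b * c) + ((y:ℤ) + 1) * (a * c) + ((z:ℤ) + 1) * (a * b)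
        = a * b * c := by linear_combination h
    have hda : a ∣ ((x:ℤ) + 1) := by
      have h1 : a ∣ ((x:ℤ) + 1) * (b * c) := by
        have heq : ((x:ℤ) + 1) * (b * c)
            = (b * c - ((y:ℤ)+1) * c - ((z:ℤ)+1) * b) * a := by linear_combination key
        rw [heq]; exact Dvd.intro_left _ rfl
      exact (hab.mul_right hac).dvd_of_dvd_mul_right h1
    have hdb : b ∣ ((y:ℤ) + 1) := by
      have h1 : b ∣ ((y:ℤ) + 1) * (a * c) := by
        have heq : ((y:ℤ) + 1) * (a * c)
            = (a * c - ((x:ℤ)+1) * c - ((z:ℤ)+1) * a) * b := by linear_combination key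
        rw [heq]; exact Dvd.intro_left _ rfl
      exact (hab.symm.mul_right hbc).dvd_of_dvd_mul_right h1
    have hdc : c ∣ ((z:ℤ) + 1) := by
      have h1 : c ∣ ((z:ℤ) + 1) * (a * b) := by
        have heq : ((z:ℤ) + 1) * (a * b)
            = (a * b - ((x:ℤ)+1) * b - ((y:ℤ)+1) * a) * c := by linear_combination key
        rw [heq]; exact Dvd.intro_left _ rfl
      exact (hac.symm.mul_right hbc.symm).dvd_of_dvd_mul_right h1
    have hx : a ≤ (x:ℤ) + 1 := Int.le_of_dvd (by positivity) hda
    have hy : b ≤ (y:ℤ) + 1 := Int.le_of_dvd (by positivity) hdb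
    have hz : c ≤ (z:ℤ) + 1 := Int.le_of_dvd (by positivity) hdc
    have h1 : a * (b * c) ≤ ((x:ℤ) + 1) * (b * c) :=
      mul_le_mul_of_nonneg_right hx (le_of_lt hbc0)
    have h2 : b * (a * c) ≤ ((y:ℤ) + 1) * (a * c) :=
      mul_le_mul_of_nonneg_right hy (le_of_lt hac0)
    have h3 : c * (a * b) ≤ ((z:ℤ) + 1) * (a * b) :=
      mul_le_mul_of_nonneg_right hz (le_of_lt hab0)
    rw [e1] at h1; rw [e2] at h2; rw [e3] at h3
    linarith
  -- the two triple sets coincide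
  have hsets : {t : ℕ × ℕ × ℕ | f t ≤ N} = {t : ℕ × ℕ × ℕ | f t < N} := by
    ext t
    simp only [Set.mem_setOf_eq]
    exact ⟨fun h => lt_of_le_of_ne h (hnotN t), le_of_lt⟩
  -- injectivity on the ≤ set
  have hinj : Set.InjOn f {t : ℕ × ℕ × ℕ | f t ≤ N} := by
    rintro ⟨x, y, z⟩ ht ⟨x', y', z'⟩ hu heq
    simp only [Set.mem_setOf_eq, hf] at ht hu heq
    have ny : (0:ℤ) ≤ (y:ℤ) * (a * c) := mul_nonneg (Int.ofNat_nonneg y) (le_of_lt hac0)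
    have nz : (0:ℤ) ≤ (z:ℤ) * (a * b) := mul_nonneg (Int.ofNat_nonneg z) (le_of_lt hab0)
    have nx : (0:ℤ) ≤ (x:ℤ) * (b * c) := mul_nonneg (Int.ofNat_nonneg x) (le_of_lt hbc0)
    have ny' : (0:ℤ) ≤ (y':ℤ) * (a * c) := mul_nonneg (Int.ofNat_nonneg y') (le_of_lt hac0)
    have nz' : (0:ℤ) ≤ (z':ℤ) * (a * b) := mul_nonneg (Int.ofNat_nonneg z') (le_of_lt hab0)
    have nx' : (0:ℤ) ≤ (x':ℤ) * (b * c) := mul_nonneg (Int.ofNat_nonneg x') (le_of_lt hbc0)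
    have bx : (x:ℤ) < a := by
      by_contra h
      push_neg at h
      have : a * (b * c) ≤ (x:ℤ) * (b * c) := mul_le_mul_of_nonneg_right h (le_of_lt hbc0)
      linarith
    have bx' : (x':ℤ) < a := by
      by_contra h
      push_neg at h
      have : a * (b * c) ≤ (x':ℤ) * (b * c) := mul_le_mul_of_nonneg_right h (le_of_lt hbc0)
      linarith
    have by1 : (y:ℤ) < b := by
      by_contra h
      push_neg at h
      have : b * (a * c) ≤ (y:ℤ) * (a * c) := mul_le_mul_of_nonneg_right h (le_of_lt hac0)
      linarith
    have by1' : (y':ℤ) < b := by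
      by_contra h
      push_neg at h
      have : b * (a * c) ≤ (y':ℤ) * (a * c) := mul_le_mul_of_nonneg_right h (le_of_lt hac0)
      linarith
    have hxx : (x:ℤ) = x' := by
      have hdvd : a ∣ ((x:ℤ) - x') * (b * c) := by
        have heq2 : ((x:ℤ) - x') * (b * c)
            = (((y':ℤ) - y) * c + ((z':ℤ) - z) * b) * a := by linear_combination heq
        rw [heq2]; exact Dvd.intro_left _ rfl
      have hd : a ∣ ((x:ℤ) - x') := (hab.mul_right hac).dvd_of_dvd_mul_right hdvd
      have hz0 : (x:ℤ) - x' = 0 := by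
        refine Int.eq_zero_of_abs_lt_dvd hd ?_
        rw [abs_lt]
        constructor
        · linarith [Int.ofNat_nonneg x]
        · linarith [Int.ofNat_nonneg x']
      linarith
    have hyy : (y:ℤ) = y' := by
      have hdvd : b ∣ ((y:ℤ) - y') * (a * c) := by
        have heq2 : ((y:ℤ) - y') * (a * c)
            = (((x':ℤ) - x) * c + ((z':ℤ) - z) * a) * b := by linear_combination heq
        rw [heq2]; exact Dvd.intro_left _ rfl
      have hd : b ∣ ((y:ℤ) - y') := (hab.symm.mul_right hbc).dvd_of_dvd_mul_right hdvd
      have hz0 : (y:ℤ) - y' = 0 := by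
        refine Int.eq_zero_of_abs_lt_dvd hd ?_
        rw [abs_lt]
        constructor
        · linarith [Int.ofNat_nonneg y]
        · linarith [Int.ofNat_nonneg y']
      linarith
    have hzz : (z:ℤ) = z' := by
      have h1 : (z:ℤ) * (a * b) = (z':ℤ) * (a * b) := by
        rw [hxx, hyy] at heq; linarith
      exact mul_right_cancel₀ (ne_of_gt hab0) h1
    have ex : x = x' := Int.ofNat_inj.mp hxx
    have ey : y = y' := Int.ofNat_inj.mp hyy
    have ez : z = z' := Int.ofNat_inj.mp hzz
    simp [ex, ey, ez]
  -- the value set is the image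
  have himg : {m : ℤ | (∃ x y z : ℕ,
      m = (x : ℤ) * (b * c) + (y : ℤ) * (a * c) + (z : ℤ) * (a * b)) ∧ 0 ≤ m ∧ m ≤ N}
      = f '' {t : ℕ × ℕ × ℕ | f t ≤ N} := by
    ext m
    simp only [Set.mem_setOf_eq, Set.mem_image]
    constructor
    · rintro ⟨⟨x, y, z, rfl⟩, _, hle⟩
      exact ⟨(x, y, z), hle, rfl⟩
    · rintro ⟨⟨x, y, z⟩, hle, rfl⟩
      refine ⟨⟨x, y, z, rfl⟩, ?_, hle⟩
      simp only [hf]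
      positivity
  have hmain : {m : ℤ | (∃ x y z : ℕ,
      m = (x : ℤ) * (b * c) + (y : ℤ) * (a * c) + (z : ℤ) * (a * b)) ∧ 0 ≤ m ∧ m ≤ N}.ncard
      = {t : ℕ × ℕ × ℕ | f t ≤ N}.ncard := by
    rw [himg]; exact Set.ncard_image_of_injOn hinj
  exact ⟨hmain, by rw [hmain, hsets]⟩
end

section
/- Let r ≥ 3 and let a₁ > a₂ > ⋯ > a_r ≥ 2 be pairwise coprime integers satisfying 3/a₁ + 1/a₂ + 1/a₃ + ⋯ + 1/a_r ≥ r − 2. Then r = 3 and (a₁,a₂,a₃) is one of the nine triples (5,3,2), (7,3,2), (11,3,2), (13,3,2), (17,3,2), (7,5,2), (9,5,2), (5,4,3), (7,4,3). -/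
theorem enum (x y z : ℤ) (hz : 2 ≤ z) (hzy : z < y) (hyx : y < x)
    (hxy : Int.gcd x y = 1) (hxz : Int.gcd x z = 1) (hyz : Int.gcd y z = 1)
    (h : x*y*z ≤ 3*(y*z) + x*z + x*y) :
    (x,y,z) = (5,3,2) ∨ (x,y,z) = (7,3,2) ∨ (x,y,z) = (11,3,2) ∨ (x,y,z) = (13,3,2) ∨
    (x,y,z) = (17,3,2) ∨ (x,y,z) = (7,5,2) ∨ (x,y,z) = (9,5,2) ∨ (x,y,z) = (5,4,3) ∨
    (x,y,z) = (7,4,3) := by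
  have hz3 : z ≤ 3 := by
    by_contra hc
    push_neg at hc
    nlinarith [mul_nonneg (by linarith : (0:ℤ) ≤ x - y - 1) (by nlinarith : (0:ℤ) ≤ y*z - y - z),
      mul_nonneg (by linarith : (0:ℤ) ≤ y - z - 1) (by linarith : (0:ℤ) ≤ z - 4),
      mul_pos (by linarith : (0:ℤ) < y) (by linarith : (0:ℤ) < z)]
  have hy7 : y ≤ 7 := by
    by_contra hc
    push_neg at hc
    nlinarith [mul_nonneg (by linarith : (0:ℤ) ≤ x - y - 1) (by nlinarith : (0:ℤ) ≤ y*z - y - z),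
      mul_nonneg (by linarith : (0:ℤ) ≤ y - 8) (by linarith : (0:ℤ) ≤ z - 2)]
  have h1 : (0:ℤ) ≤ y*z - y - z - 1 := by nlinarith
  have hx : x ≤ 18 := by
    by_contra hc
    push_neg at hc
    nlinarith [mul_nonneg (by linarith : (0:ℤ) ≤ x - 18) h1,
      mul_nonneg (by linarith : (0:ℤ) ≤ 7 - y) (by linarith : (0:ℤ) ≤ 3 - z)]
  interval_cases z <;> interval_cases y <;> interval_cases x <;> revert hxy hxz hyz h <;> decide

/-- If `r ≥ 3` and `a₁ > a₂ > ⋯ > a_r ≥ 2` are pairwise coprime integers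
with `3/a₁ + 1/a₂ + ⋯ + 1/a_r ≥ r − 2`, then `r = 3` and `(a₁,a₂,a₃)` is one of the nine
listed triples. -/
theorem exceptional_triples (r : ℕ) (hr : 3 ≤ r) (a : Fin r → ℤ)
    (hanti : ∀ i j : Fin r, i < j → a j < a i)
    (ha2 : ∀ j, 2 ≤ a j)
    (hcop : ∀ i j, i ≠ j → IsCoprime (a i) (a j))
    (hin : (r : ℚ) - 2 ≤ 3 / (a ⟨0, by omega⟩ : ℚ) +
      ∑ j ∈ Finset.univ.erase ⟨0, by omega⟩, 1 / (a j : ℚ)) :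
    r = 3 ∧
    (a ⟨0, by omega⟩, a ⟨1, by omega⟩, a ⟨2, by omega⟩) ∈
      ({(5,3,2), (7,3,2), (11,3,2), (13,3,2), (17,3,2),
        (7,5,2), (9,5,2), (5,4,3), (7,4,3)} : Set (ℤ × ℤ × ℤ)) := by
  have key : ∀ m (k : ℕ) (hk : k < r), k + m = r - 1 → (m:ℤ) + 2 ≤ a ⟨k, hk⟩ := by
    intro m
    induction m with
    | zero => intro k hk _; simpa using ha2 ⟨k, hk⟩
    | succ n ih =>
      intro k hk hkm
      have hk1 : k + 1 < r := by omega
      have h1 := ih (k+1) hk1 (by omega)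
      have h2 := hanti ⟨k, hk⟩ ⟨k+1, hk1⟩ (by simp [Fin.lt_def])
      push_cast
      push_cast at h1
      omega
  have hr3 : r = 3 := by
    by_contra hne
    have hr4 : 4 ≤ r := by omega
    have ha0 : (r:ℤ) + 1 ≤ a ⟨0, by omega⟩ := by
      have h := key (r-1) 0 (by omega) (by omega)
      omega
    have ha1 : (r:ℤ) ≤ a ⟨1, by omega⟩ := by
      have h := key (r-2) 1 (by omega) (by omega)
      omega
    set i0 : Fin r := ⟨0, by omega⟩ with hi0
    set i1 : Fin r := ⟨1, by omega⟩ with hi1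
    have h1mem : i1 ∈ Finset.univ.erase i0 :=
      Finset.mem_erase.2 ⟨by simp [hi0, hi1, Fin.ext_iff], Finset.mem_univ _⟩
    rw [← Finset.add_sum_erase _ _ h1mem] at hin
    have hsumle : ∑ j ∈ (Finset.univ.erase i0).erase i1, 1 / (a j : ℚ) ≤
        ((r - 2 : ℕ) : ℚ) * (1/2) := by
      have hcard : ((Finset.univ.erase i0).erase i1).card = r - 2 := by
        rw [Finset.card_erase_of_mem h1mem, Finset.card_erase_of_mem (Finset.mem_univ _)]
        simp only [Finset.card_univ, Fintype.card_fin]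
        omega
      calc ∑ j ∈ (Finset.univ.erase i0).erase i1, 1 / (a j : ℚ)
          ≤ ((Finset.univ.erase i0).erase i1).card • (1/2 : ℚ) := by
            apply Finset.sum_le_card_nsmul
            intro x _
            have h2 : (2:ℚ) ≤ (a x : ℚ) := by exact_mod_cast ha2 x
            rw [div_le_div_iff₀ (by linarith) (by norm_num)]
            linarith
        _ = ((r - 2 : ℕ) : ℚ) * (1/2) := by rw [hcard, nsmul_eq_mul]
    have h5 : (5:ℚ) ≤ (a i0 : ℚ) := by
      have : (r:ℚ) + 1 ≤ (a i0 : ℚ) := by exact_mod_cast ha0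
      have hrq : (4:ℚ) ≤ (r:ℚ) := by exact_mod_cast hr4
      linarith
    have h4 : (4:ℚ) ≤ (a i1 : ℚ) := by
      have : (r:ℚ) ≤ (a i1 : ℚ) := by exact_mod_cast ha1
      have hrq : (4:ℚ) ≤ (r:ℚ) := by exact_mod_cast hr4
      linarith
    have hb0 : 3 / (a i0 : ℚ) ≤ 3/5 := by
      rw [div_le_div_iff₀ (by linarith) (by norm_num)]; linarith
    have hb1 : 1 / (a i1 : ℚ) ≤ 1/4 := by
      rw [div_le_div_iff₀ (by linarith) (by norm_num)]; linarith
    have hcast : ((r - 2 : ℕ) : ℚ) = (r:ℚ) - 2 := by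
      have : (2:ℕ) ≤ r := by omega
      push_cast [this]
      ring
    rw [hcast] at hsumle
    have hrq : (4:ℚ) ≤ (r:ℚ) := by exact_mod_cast hr4
    linarith
  subst hr3
  refine ⟨rfl, ?_⟩
  simp only [show (⟨0, by omega⟩ : Fin 3) = 0 from rfl, show (⟨1, by omega⟩ : Fin 3) = 1 from rfl,
    show (⟨2, by omega⟩ : Fin 3) = 2 from rfl] at hin ⊢
  have hx : (0:ℚ) < (a 0 : ℚ) := by exact_mod_cast lt_of_lt_of_le (by norm_num) (ha2 0)
  have hy : (0:ℚ) < (a 1 : ℚ) := by exact_mod_cast lt_of_lt_of_le (by norm_num) (ha2 1)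
  have hz : (0:ℚ) < (a 2 : ℚ) := by exact_mod_cast lt_of_lt_of_le (by norm_num) (ha2 2)
  have hsum : ∑ j ∈ Finset.univ.erase (0 : Fin 3), 1 / (a j : ℚ)
      = 1 / (a 1 : ℚ) + 1 / (a 2 : ℚ) := by
    rw [show (Finset.univ.erase (0 : Fin 3)) = {1, 2} from by decide]
    rw [Finset.sum_insert (by decide), Finset.sum_singleton]
  rw [hsum] at hin
  have e : 3 / (a 0 : ℚ) + (1 / (a 1 : ℚ) + 1 / (a 2 : ℚ)) =
      (3 * ((a 1:ℚ) * (a 2:ℚ)) + (a 0:ℚ) * (a 2:ℚ) + (a 0:ℚ) * (a 1:ℚ)) /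
        ((a 0:ℚ) * (a 1:ℚ) * (a 2:ℚ)) := by
    field_simp
    ring
  have hin' : (1:ℚ) ≤ 3 / (a 0 : ℚ) + (1 / (a 1 : ℚ) + 1 / (a 2 : ℚ)) := by
    have : ((3:ℕ):ℚ) - 2 = 1 := by norm_num
    linarith [hin]
  rw [e, le_div_iff₀ (by positivity), one_mul] at hin'
  have hint : a 0 * a 1 * a 2 ≤ 3 * (a 1 * a 2) + a 0 * a 2 + a 0 * a 1 := by
    exact_mod_cast hin'
  have hxy : Int.gcd (a 0) (a 1) = 1 :=
    Int.isCoprime_iff_gcd_eq_one.mp (hcop 0 1 (by decide))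
  have hxz : Int.gcd (a 0) (a 2) = 1 :=
    Int.isCoprime_iff_gcd_eq_one.mp (hcop 0 2 (by decide))
  have hyz : Int.gcd (a 1) (a 2) = 1 :=
    Int.isCoprime_iff_gcd_eq_one.mp (hcop 1 2 (by decide))
  have h01 := hanti 0 1 (by decide)
  have h12 := hanti 1 2 (by decide)
  have := enum (a 0) (a 1) (a 2) (ha2 2) h12 h01 hxy hxz hyz hint
  simpa only [Set.mem_insert_iff, Set.mem_singleton_iff, Prod.mk.injEq] using this
end

section
/- Let k ≥ 1 be an integer and set (a,b,c) = (2,5,10k+3), so that N = abc − ab − ac − bc = 30k − 1, and let G be the additive submonoid of the nonnegative integers generated by 10, 20k+6 and 50k+15. Then G ∩ [0, N/2] = {10j : j integer, 0 ≤ j ≤ ⌊N/20⌋}, and {N − g : g ∈ G} ∩ [0, N] = {10j+9 : 0 ≤ j ≤ 3k−1} ∪ {10j+3 : 0 ≤ j ≤ k−1}. -/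
/-- Case `(a,b,c) = (2,5,10k+3)`, `N = 30k − 1`, `G` generated by
`bc = 50k+15`, `ac = 20k+6`, `ab = 10`. Then `G ∩ [0, N/2] = {10j : 0 ≤ j ≤ ⌊N/20⌋}` and
`(N − G) ∩ [0,N] = {10j+9 : 0 ≤ j ≤ 3k−1} ∪ {10j+3 : 0 ≤ j ≤ k−1}`. -/
theorem case_2_5_10k3 (k : ℕ) (hk : 1 ≤ k) (N : ℤ) (hN : N = 30 * (k : ℤ) - 1)
    (G : Set ℤ)
    (hG : G = {n : ℤ | ∃ x y z : ℕ,
      n = (x : ℤ) * (50 * (k : ℤ) + 15) + (y : ℤ) * (20 * (k : ℤ) + 6) + (z : ℤ) * 10}) :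
    {n : ℤ | n ∈ G ∧ 0 ≤ n ∧ 2 * n ≤ N} =
      {n : ℤ | ∃ j : ℕ, (j : ℤ) ≤ N / 20 ∧ n = 10 * (j : ℤ)} ∧
    {n : ℤ | (∃ g ∈ G, n = N - g) ∧ 0 ≤ n ∧ n ≤ N} =
      {n : ℤ | ∃ j : ℕ, j < 3 * k ∧ n = 10 * (j : ℤ) + 9} ∪
      {n : ℤ | ∃ j : ℕ, j < k ∧ n = 10 * (j : ℤ) + 3} := by
  subst hN hG
  have hk' : (1:ℤ) ≤ (k:ℤ) := by exact_mod_cast hk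
  constructor
  · ext n
    simp only [Set.mem_setOf_eq]
    constructor
    · rintro ⟨⟨x, y, z, rfl⟩, hn0, hn2⟩
      match x, y with
      | 0, 0 =>
        refine ⟨z, ?_, by push_cast; ring⟩
        simp only [Nat.cast_zero, zero_mul, zero_add] at hn2
        omega
      | x+1, y =>
        exfalso
        push_cast at hn2
        nlinarith [mul_nonneg (Int.natCast_nonneg x) (show (0:ℤ) ≤ 50*(k:ℤ)+15 by linarith),
          mul_nonneg (Int.natCast_nonneg y) (show (0:ℤ) ≤ 20*(k:ℤ)+6 by linarith),
          Int.natCast_nonneg z]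
      | 0, y+1 =>
        exfalso
        push_cast at hn2
        nlinarith [mul_nonneg (Int.natCast_nonneg y) (show (0:ℤ) ≤ 20*(k:ℤ)+6 by linarith),
          Int.natCast_nonneg z]
    · rintro ⟨j, hj, rfl⟩
      refine ⟨⟨0, 0, j, by push_cast; ring⟩, by positivity, by omega⟩
  · ext n
    simp only [Set.mem_setOf_eq, Set.mem_union]
    constructor
    · rintro ⟨⟨g, ⟨x, y, z, rfl⟩, rfl⟩, hn0, hnN⟩
      match x, y with
      | 0, 0 =>
        left
        simp only [Nat.cast_zero, zero_mul, zero_add] at hn0 ⊢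
        exact ⟨3*k-1-z, by omega, by omega⟩
      | 0, 1 =>
        right
        simp only [Nat.cast_zero, Nat.cast_one, zero_mul, one_mul, zero_add] at hn0 ⊢
        exact ⟨k-1-z, by omega, by omega⟩
      | x+1, y =>
        exfalso
        push_cast at hn0
        nlinarith [mul_nonneg (Int.natCast_nonneg x) (show (0:ℤ) ≤ 50*(k:ℤ)+15 by linarith),
          mul_nonneg (Int.natCast_nonneg y) (show (0:ℤ) ≤ 20*(k:ℤ)+6 by linarith),
          Int.natCast_nonneg z]
      | 0, y+2 =>
        exfalso
        push_cast at hn0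
        nlinarith [mul_nonneg (Int.natCast_nonneg y) (show (0:ℤ) ≤ 20*(k:ℤ)+6 by linarith),
          Int.natCast_nonneg z]
    · rintro (⟨j, hj, rfl⟩ | ⟨j, hj, rfl⟩)
      · refine ⟨⟨((3*k-1-j : ℕ) : ℤ)*10, ⟨0, 0, 3*k-1-j, by push_cast; ring⟩, by omega⟩,
          by omega, by omega⟩
      · refine ⟨⟨(20*(k:ℤ)+6) + ((k-1-j : ℕ) : ℤ)*10, ⟨0, 1, k-1-j, by push_cast; ring⟩,
          by omega⟩, by omega, by omega⟩
end
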